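/- arXiv:2211.11323 — 9 statements merged into one kernel-verified Lean document; each statement's English description precedes it below -/
import Mathlib

section
/- Let S ∈ ℝ^{d×k} satisfy SᵀS = I_k and A ∈ ℝ^{d×d} be symmetric with eigenvalues λ_1 ≥ ... ≥ λ_d. If the eigenvalues μ_1 ≥ ... ≥ μ_k of C = SᵀAS satisfy μ_i = λ_i for all i = 1,...,k, and v_1,...,v_k are corresponding orthonormal eigenvectors of C, then Sv_i is a λ_i-eigenvector of A for each i. -/
/-!
Expand `S vᵢ` in the orthonormal eigenbasis `u_j` of `A`, with coefficients `c_{ji} = u_j ⬝ S vᵢ`.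
The columns of `c` are orthonormal, so its rows have norm at most `1`, and the Rayleigh quotient
of `S vᵢ` is `∑ⱼ λⱼ c_{ji}² = μᵢ = λᵢ`. By induction on `i`, the weights `c_{ji}²` of column `i`
vanish on rows with `λⱼ > λᵢ`: these rows are no more numerous than the earlier columns `l` with
`λ_l > λᵢ`, which already carry their full weight `1` on them, while every row carries weight at
most `1`. Having no weight above its mean `λᵢ`, column `i` has none below it either, so `S vᵢ`
lies in the `λᵢ`-eigenspace.
-/

open Matrix Finset

theorem weight_eq_zero_of_lt_mean {ι : Type*} [Fintype ι] {lam p : ι → ℝ} {t : ℝ}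
    (hp : 0 ≤ p) (hsum : ∑ j, p j = 1) (hmean : ∑ j, lam j * p j = t)
    (habove : ∀ j, t < lam j → p j = 0) {j : ι} (hj : lam j < t) : p j = 0 := by
  have hterm : ∀ m ∈ univ, 0 ≤ (t - lam m) * p m := fun m _ => by
    rcases le_or_gt (lam m) t with h | h
    · exact mul_nonneg (sub_nonneg.mpr h) (hp m)
    · simp [habove m h]
  have hzero : ∑ m, (t - lam m) * p m = 0 := by
    simp only [sub_mul, sum_sub_distrib, ← mul_sum, hsum, hmean, mul_one, sub_self]
  have := (sum_eq_zero_iff_of_nonneg hterm).mp hzero j (mem_univ j)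
  exact (mul_eq_zero.mp this).resolve_left (sub_ne_zero.mpr hj.ne')

section Weights

variable {d k : ℕ} (hkd : k ≤ d) {lam : Fin d → ℝ} {M : Fin d → Fin k → ℝ}

theorem weight_eq_zero_of_mean_lt (hlam : Antitone lam) (hM : 0 ≤ M)
    (hrow : ∀ j, ∑ l, M j l ≤ 1) (hcol : ∀ l, ∑ j, M j l = 1) (i : Fin k)
    (hprev : ∀ l < i, ∀ j, lam j ≠ lam (Fin.castLE hkd l) → M j l = 0)
    {j : Fin d} (hj : lam (Fin.castLE hkd i) < lam j) : M j i = 0 := by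
  classical
  set P := univ.filter fun j => lam (Fin.castLE hkd i) < lam j
  set Q := univ.filter fun l => lam (Fin.castLE hkd i) < lam (Fin.castLE hkd l)
  have hQ_lt : ∀ l ∈ Q, l < i := fun l hl => by
    by_contra! h
    exact (hlam ((Fin.castLE_le_castLE_iff hkd).mpr h)).not_gt (mem_filter.mp hl).2
  have hcard : #P ≤ #Q := card_le_card_of_surjOn (Fin.castLE hkd) fun j hj => by
    have hji : j < Fin.castLE hkd i := by
      by_contra! h
      exact (hlam h).not_gt (mem_filter.mp hj).2
    refine ⟨⟨j, Fin.lt_def.mp hji |>.trans i.isLt⟩, ?_, rfl⟩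
    simpa [Q] using (mem_filter.mp hj).2
  have hQ_mass : ∀ l ∈ Q, ∑ j ∈ P, M j l = 1 := fun l hl => by
    rw [← hcol l]
    refine sum_subset (subset_univ _) fun j _ hjP => hprev l (hQ_lt l hl) j ?_
    simp only [P, mem_filter, mem_univ, true_and, not_lt] at hjP
    exact (hjP.trans_lt (mem_filter.mp hl).2).ne
  have hiQ : i ∉ Q := fun hi => lt_irrefl i (hQ_lt i hi)
  have hbound : ∑ j' ∈ P, M j' i + #Q ≤ #Q := calc
    ∑ j' ∈ P, M j' i + #Q = ∑ l ∈ insert i Q, ∑ j' ∈ P, M j' l := by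
      rw [sum_insert hiQ, sum_congr rfl hQ_mass]; simp
    _ ≤ ∑ l, ∑ j' ∈ P, M j' l :=
      sum_le_sum_of_subset_of_nonneg (subset_univ _) fun l _ _ => sum_nonneg fun j' _ => hM j' l
    _ = ∑ j' ∈ P, ∑ l, M j' l := sum_comm
    _ ≤ ∑ j' ∈ P, 1 := sum_le_sum fun j' _ => hrow j'
    _ ≤ #Q := by simpa using hcard
  have hzero := (sum_eq_zero_iff_of_nonneg fun j' _ => hM j' i).mp
    (le_antisymm (by linarith) (sum_nonneg fun j' _ => hM j' i))
  exact hzero j (mem_filter.mpr ⟨mem_univ j, hj⟩)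

theorem weight_eq_zero_of_ne (hlam : Antitone lam) (hM : 0 ≤ M)
    (hrow : ∀ j, ∑ l, M j l ≤ 1) (hcol : ∀ l, ∑ j, M j l = 1)
    (hmean : ∀ l, ∑ j, lam j * M j l = lam (Fin.castLE hkd l)) (i : Fin k) (j : Fin d)
    (hj : lam j ≠ lam (Fin.castLE hkd i)) : M j i = 0 := by
  induction i using WellFoundedLT.induction generalizing j with
  | _ i ih =>
    have habove : ∀ j, lam (Fin.castLE hkd i) < lam j → M j i = 0 := fun j =>
      weight_eq_zero_of_mean_lt hkd hlam hM hrow hcol i ih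
    rcases hj.lt_or_gt with hlt | hgt
    · exact weight_eq_zero_of_lt_mean (fun j => hM j i) (hcol i) (hmean i) habove hlt
    · exact habove j hgt

end Weights

theorem sum_row_sq_le_one_of_transpose_mul_self_eq_one {m n : Type*} [Fintype m] [Fintype n]
    [DecidableEq n] {c : Matrix m n ℝ} (hc : cᵀ * c = 1) (j : m) : ∑ l, c j l ^ 2 ≤ 1 := by
  set P := c * cᵀ
  have hP : P * P = P := by
    simp only [P, Matrix.mul_assoc, ← Matrix.mul_assoc cᵀ, hc, Matrix.one_mul]
  have hPjj : P j j = ∑ l, c j l ^ 2 := by simp [P, mul_apply, sq]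
  have hsq : P j j ^ 2 ≤ P j j := calc
    P j j ^ 2 ≤ ∑ m, P j m ^ 2 := single_le_sum (f := fun m => P j m ^ 2)
      (fun m _ => sq_nonneg _) (mem_univ j)
    _ = P j j := by
      conv_rhs => rw [← hP]
      simp only [mul_apply, sq]
      refine sum_congr rfl fun m _ => ?_
      congr 1
      simp only [P, mul_apply, transpose_apply, mul_comm]
  rw [← hPjj]
  nlinarith

theorem of_mul_transpose_self_eq_one {m n : Type*} [Fintype n] [DecidableEq m] {u : m → n → ℝ}
    (hu : ∀ j l, u j ⬝ᵥ u l = if j = l then 1 else 0) : of u * (of u)ᵀ = 1 := by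
  ext j l
  exact (hu j l).trans (one_apply ..).symm

theorem mul_transpose_of_eq_iff_mulVec_eq_smul {m n : Type*} [Fintype n] [DecidableEq m] [Fintype m]
    (A : Matrix n n ℝ) (u : m → n → ℝ) (lam : m → ℝ) :
    A * (of u)ᵀ = (of u)ᵀ * diagonal lam ↔ ∀ j, A *ᵥ u j = lam j • u j := by
  simp only [← Matrix.ext_iff, mul_diagonal]
  simp only [funext_iff, mul_apply, mulVec, dotProduct, transpose_apply, of_apply,
    Pi.smul_apply, smul_eq_mul]
  exact ⟨fun h j a => (h a j).trans (mul_comm _ _), fun h a j => (h j a).trans (mul_comm _ _)⟩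

theorem diagonal_mul_eq_mul_diagonal_of_interlacing_eq {d k : ℕ} (hkd : k ≤ d) {lam : Fin d → ℝ}
    (hlam : Antitone lam) {c : Matrix (Fin d) (Fin k) ℝ} (hc : cᵀ * c = 1)
    (hmean : ∀ i, (cᵀ * diagonal lam * c) i i = lam (Fin.castLE hkd i)) :
    diagonal lam * c = c * diagonal fun i => lam (Fin.castLE hkd i) := by
  have hcol : ∀ i, ∑ j, c j i ^ 2 = 1 := fun i => by
    simpa [mul_apply, sq] using congrFun (congrFun hc i) i
  have hcol_mean : ∀ i, ∑ j, lam j * c j i ^ 2 = lam (Fin.castLE hkd i) := fun i => by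
    rw [← hmean, mul_apply]
    simp only [mul_diagonal, transpose_apply]
    exact sum_congr rfl fun j _ => by ring
  have hzero := weight_eq_zero_of_ne hkd hlam (M := fun j i => c j i ^ 2) (fun j i => sq_nonneg _)
    (sum_row_sq_le_one_of_transpose_mul_self_eq_one hc) hcol hcol_mean
  ext j i
  rw [diagonal_mul, mul_diagonal]
  by_cases h : lam j = lam (Fin.castLE hkd i)
  · rw [h, mul_comm]
  · simp [pow_eq_zero_iff two_ne_zero |>.mp (hzero i j h)]

theorem stmt3_general (d k : ℕ) (hkd : k ≤ d)
    (S : Matrix (Fin d) (Fin k) ℝ) (hS : Sᵀ * S = 1)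
    (A : Matrix (Fin d) (Fin d) ℝ)
    (lam : Fin d → ℝ) (uA : Fin d → Fin d → ℝ)
    (horthA : ∀ j l : Fin d, uA j ⬝ᵥ uA l = if j = l then 1 else 0)
    (heigA : ∀ j : Fin d, A.mulVec (uA j) = lam j • uA j)
    (hdecA : ∀ j l : Fin d, j ≤ l → lam l ≤ lam j)
    (mu : Fin k → ℝ) (v : Fin k → Fin k → ℝ)
    (horthC : ∀ j l : Fin k, v j ⬝ᵥ v l = if j = l then 1 else 0)
    (heigC : ∀ j : Fin k, (Sᵀ * A * S).mulVec (v j) = mu j • v j)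
    (heq : ∀ i : Fin k, mu i = lam (Fin.castLE hkd i)) :
    ∀ i : Fin k, A.mulVec (S.mulVec (v i)) = lam (Fin.castLE hkd i) • S.mulVec (v i) := by
  set U := of uA
  set W := S * (of v)ᵀ
  have hU : Uᵀ * U = 1 := mul_eq_one_comm.mp (of_mul_transpose_self_eq_one horthA)
  have hA : A = Uᵀ * diagonal lam * U := by
    rw [← (mul_transpose_of_eq_iff_mulVec_eq_smul A uA lam).mpr heigA, Matrix.mul_assoc, hU,
      Matrix.mul_one]
  have hW : Wᵀ * W = 1 := by
    rw [transpose_mul, transpose_transpose, Matrix.mul_assoc, ← Matrix.mul_assoc Sᵀ, hS,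
      Matrix.one_mul, of_mul_transpose_self_eq_one horthC]
  have hWAW : Wᵀ * A * W = diagonal mu := calc
    Wᵀ * A * W = of v * (Sᵀ * A * S * (of v)ᵀ) := by
      simp only [W, transpose_mul, transpose_transpose, Matrix.mul_assoc]
    _ = diagonal mu := by
      rw [(mul_transpose_of_eq_iff_mulVec_eq_smul _ v mu).mpr heigC, ← Matrix.mul_assoc,
        of_mul_transpose_self_eq_one horthC, Matrix.one_mul]
  have hcomm := diagonal_mul_eq_mul_diagonal_of_interlacing_eq hkd hdecA (c := U * W)
    (by rw [transpose_mul, Matrix.mul_assoc, ← Matrix.mul_assoc Uᵀ, hU, Matrix.one_mul, hW])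
    (fun i => by
      rw [show (U * W)ᵀ * diagonal lam * (U * W) = Wᵀ * (Uᵀ * diagonal lam * U) * W by
        simp only [transpose_mul, Matrix.mul_assoc], ← hA, hWAW, diagonal_apply_eq, heq])
  have hAW : A * W = W * diagonal fun i => lam (Fin.castLE hkd i) := calc
    A * W = Uᵀ * (diagonal lam * (U * W)) := by rw [hA]; simp only [Matrix.mul_assoc]
    _ = W * diagonal fun i => lam (Fin.castLE hkd i) := by
      rw [hcomm, ← Matrix.mul_assoc, ← Matrix.mul_assoc, hU, Matrix.one_mul]
  have hWcol : W = (of fun i => S *ᵥ v i)ᵀ := by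
    ext m i; simp [W, mul_apply, mulVec, dotProduct]
  rw [hWcol] at hAW
  exact (mul_transpose_of_eq_iff_mulVec_eq_smul A _ _).mp hAW

/-- Equality case of interlacing (Haemers). -/
theorem stmt3 (d k : ℕ) (hkd : k ≤ d)
    (S : Matrix (Fin d) (Fin k) ℝ) (hS : Sᵀ * S = 1)
    (A : Matrix (Fin d) (Fin d) ℝ) (hA : A.IsSymm)
    (lam : Fin d → ℝ) (uA : Fin d → Fin d → ℝ)
    (horthA : ∀ j l : Fin d, uA j ⬝ᵥ uA l = if j = l then 1 else 0)
    (heigA : ∀ j : Fin d, A.mulVec (uA j) = lam j • uA j)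
    (hdecA : ∀ j l : Fin d, j ≤ l → lam l ≤ lam j)
    (mu : Fin k → ℝ) (v : Fin k → Fin k → ℝ)
    (horthC : ∀ j l : Fin k, v j ⬝ᵥ v l = if j = l then 1 else 0)
    (heigC : ∀ j : Fin k, (Sᵀ * A * S).mulVec (v j) = mu j • v j)
    (hdecC : ∀ j l : Fin k, j ≤ l → mu l ≤ mu j)
    (heq : ∀ i : Fin k, mu i = lam (Fin.castLE hkd i)) :
    ∀ i : Fin k, A.mulVec (S.mulVec (v i)) = lam (Fin.castLE hkd i) • S.mulVec (v i) :=
  stmt3_general d k hkd S hS A lam uA horthA heigA hdecA mu v horthC heigC heq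
end

section
/- Let Λ ∈ ℝ^{p×p} be diagonal with strictly positive diagonal entries. Then for any positive semidefinite M ∈ ℝ^{p×p}, trace(Λ M (2I − M)) ≤ trace(Λ), with equality if and only if M = I_p. -/
open Matrix

/-- Matrix perspective lemma: trace(Λ M (2I − M)) ≤ trace(Λ) with equality iff M = I. -/
theorem stmt5 (p : ℕ) (lam : Fin p → ℝ) (hlam : ∀ i, 0 < lam i)
    (M : Matrix (Fin p) (Fin p) ℝ) (hM : M.PosSemidef) :
    (Matrix.diagonal lam * M * (2 - M)).trace ≤ (Matrix.diagonal lam).trace ∧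
      ((Matrix.diagonal lam * M * (2 - M)).trace = (Matrix.diagonal lam).trace ↔ M = 1) := by
  have hMsymm : Mᵀ = M := hM.isHermitian
  set N : Matrix (Fin p) (Fin p) ℝ := 1 - M with hN
  have hNsymm : ∀ i j, N j i = N i j := by
    intro i j
    have : Nᵀ = N := by rw [hN, Matrix.transpose_sub, Matrix.transpose_one, hMsymm]
    calc N j i = Nᵀ i j := rfl
      _ = N i j := by rw [this]
  have hid : Matrix.diagonal lam - Matrix.diagonal lam * M * (2 - M)
      = Matrix.diagonal lam * N * N := by
    rw [hN]; noncomm_ring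
  have htr : (Matrix.diagonal lam).trace - (Matrix.diagonal lam * M * (2 - M)).trace
      = ∑ i, ∑ j, lam i * (N i j)^2 := by
    rw [← Matrix.trace_sub, hid]
    simp only [Matrix.trace, Matrix.diag_apply, Matrix.mul_apply, Matrix.diagonal_apply]
    refine Finset.sum_congr rfl fun i _ => ?_
    simp only [ite_mul, zero_mul, Finset.sum_ite_eq]
    refine Finset.sum_congr rfl fun j _ => ?_
    simp only [Finset.mem_univ, if_pos]
    rw [hNsymm j i]; ring
  have hsumnn : 0 ≤ ∑ i, ∑ j, lam i * (N i j)^2 :=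
    Finset.sum_nonneg fun i _ => Finset.sum_nonneg fun j _ =>
      mul_nonneg (hlam i).le (sq_nonneg _)
  constructor
  · linarith
  · constructor
    · intro h
      have hzero : ∑ i, ∑ j, lam i * (N i j)^2 = 0 := by linarith
      have hNzero : N = 0 := by
        ext i j
        have h1 : ∀ i ∈ Finset.univ, (0:ℝ) ≤ ∑ j, lam i * (N i j)^2 :=
          fun i _ => Finset.sum_nonneg fun j _ => mul_nonneg (hlam i).le (sq_nonneg _)
        have h2 := (Finset.sum_eq_zero_iff_of_nonneg h1).mp hzero i (Finset.mem_univ i)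
        have h3 : ∀ j ∈ Finset.univ, (0:ℝ) ≤ lam i * (N i j)^2 :=
          fun j _ => mul_nonneg (hlam i).le (sq_nonneg _)
        have h4 := (Finset.sum_eq_zero_iff_of_nonneg h3).mp h2 j (Finset.mem_univ j)
        have := (mul_eq_zero.mp h4).resolve_left (hlam i).ne'
        simpa [Matrix.zero_apply] using pow_eq_zero_iff (n := 2) (by norm_num) |>.mp this
      have : M = 1 := by
        have := hNzero
        rw [hN, sub_eq_zero] at this
        exact this.symm
      exact this
    · intro h
      subst h
      have : N = 0 := by rw [hN]; simp
      have hz : ∑ i, ∑ j : Fin p, lam i * ((0 : Matrix (Fin p) (Fin p) ℝ) i j)^2 = 0 := by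
        simp
      rw [this, hz] at htr
      linarith
end

section
/- Let Λ = diag(λ_1,...,λ_p,0,...,0) ∈ ℝ^{k×k} with λ_i > 0 for i ≤ p, and let Φ ∈ ℝ^{k×k} be written in block form with Φ_1 ∈ ℝ^{p×k} the top p rows and Φ_2 ∈ ℝ^{(k−p)×k} the bottom rows. Then trace(ΦᵀΛΦ(2I_k − ΦᵀΦ)) ≤ λ_1 + ... + λ_p, with equality if and only if Φ_1Φ_1ᵀ = I_p and Φ_1Φ_2ᵀ = 0. -/
open Matrix

/-- Diagonal case of the unconstrained subspace characterisation. -/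
theorem stmt6 (k p : ℕ) (hp : p ≤ k) (lam : Fin k → ℝ)
    (hpos : ∀ j : Fin k, (j : ℕ) < p → 0 < lam j)
    (hzero : ∀ j : Fin k, p ≤ (j : ℕ) → lam j = 0)
    (Φ : Matrix (Fin k) (Fin k) ℝ) :
    (Φᵀ * Matrix.diagonal lam * Φ * (2 - Φᵀ * Φ)).trace ≤
        ∑ j ∈ Finset.univ.filter (fun j : Fin k => (j : ℕ) < p), lam j ∧
    ((Φᵀ * Matrix.diagonal lam * Φ * (2 - Φᵀ * Φ)).trace =
        ∑ j ∈ Finset.univ.filter (fun j : Fin k => (j : ℕ) < p), lam j ↔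
      (∀ a b : Fin k, (a : ℕ) < p → (b : ℕ) < p →
          (Φ * Φᵀ) a b = if a = b then 1 else 0) ∧
      (∀ a b : Fin k, (a : ℕ) < p → p ≤ (b : ℕ) → (Φ * Φᵀ) a b = 0)) := by
  classical
  set A : Matrix (Fin k) (Fin k) ℝ := Φ * Φᵀ with hA
  have hsym : ∀ a b, A a b = A b a := by
    intro a b
    simp [hA, Matrix.mul_apply, mul_comm]
  set E : Fin k → ℝ := fun j =>
    (A j j - 1) ^ 2 + ∑ b ∈ Finset.univ.erase j, (A j b) ^ 2 with hE
  have hEnonneg : ∀ j, 0 ≤ E j := by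
    intro j
    exact add_nonneg (sq_nonneg _) (Finset.sum_nonneg fun b _ => sq_nonneg _)
  -- trace computation
  have hMeq : Φ * (2 - Φᵀ * Φ) * Φᵀ = 2 * A - A * A := by
    rw [hA]; noncomm_ring
  have htr : (Φᵀ * Matrix.diagonal lam * Φ * (2 - Φᵀ * Φ)).trace
      = ∑ j, lam j * (1 - E j) := by
    have h1 : Φᵀ * Matrix.diagonal lam * Φ * (2 - Φᵀ * Φ)
        = Φᵀ * (Matrix.diagonal lam * (Φ * (2 - Φᵀ * Φ))) := by
      noncomm_ring
    rw [h1, Matrix.trace_mul_comm]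
    have h2 : Matrix.diagonal lam * (Φ * (2 - Φᵀ * Φ)) * Φᵀ
        = Matrix.diagonal lam * (2 * A - A * A) := by
      rw [← hMeq]; noncomm_ring
    rw [h2]
    rw [Matrix.trace]
    apply Finset.sum_congr rfl
    intro j _
    have hdiag : (Matrix.diagonal lam * (2 * A - A * A)).diag j
        = lam j * ((2 * A - A * A : Matrix (Fin k) (Fin k) ℝ) j j) := by
      simp [Matrix.diag, Matrix.diagonal_mul]
    rw [hdiag]
    congr 1
    have hAA : (A * A) j j = ∑ b, (A j b) ^ 2 := by
      rw [Matrix.mul_apply]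
      apply Finset.sum_congr rfl
      intro b _
      rw [sq, hsym j b]
    have hsplit : ∑ b, (A j b) ^ 2
        = (A j j) ^ 2 + ∑ b ∈ Finset.univ.erase j, (A j b) ^ 2 := by
      rw [← Finset.add_sum_erase _ _ (Finset.mem_univ j)]
    have h2A : (2 * A - A * A : Matrix (Fin k) (Fin k) ℝ) j j
        = 2 * A j j - (A * A) j j := by
      rw [Matrix.sub_apply]
      congr 1
      rw [two_mul, two_mul, Matrix.add_apply]
    rw [h2A, hAA, hsplit, hE]
    ring
  have hfilter : ∑ j, lam j * (1 - E j)
      = ∑ j ∈ Finset.univ.filter (fun j : Fin k => (j : ℕ) < p),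
          lam j * (1 - E j) := by
    symm
    apply Finset.sum_filter_of_ne
    intro j _ hne
    by_contra h
    push_neg at h
    exact hne (by rw [hzero j h, zero_mul])
  have hle : ∀ j ∈ Finset.univ.filter (fun j : Fin k => (j : ℕ) < p),
      lam j * (1 - E j) ≤ lam j := by
    intro j hj
    rw [Finset.mem_filter] at hj
    have hl := hpos j hj.2
    calc lam j * (1 - E j) ≤ lam j * 1 := by
          apply mul_le_mul_of_nonneg_left _ hl.le
          linarith [hEnonneg j]
      _ = lam j := mul_one _
  have htotal_le : (Φᵀ * Matrix.diagonal lam * Φ * (2 - Φᵀ * Φ)).trace ≤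
      ∑ j ∈ Finset.univ.filter (fun j : Fin k => (j : ℕ) < p), lam j := by
    rw [htr, hfilter]
    exact Finset.sum_le_sum hle
  refine ⟨htotal_le, ?_⟩
  rw [htr, hfilter]
  rw [Finset.sum_eq_sum_iff_of_le hle]
  constructor
  · intro h
    have hE0 : ∀ j : Fin k, (j : ℕ) < p → E j = 0 := by
      intro j hj
      have := h j (Finset.mem_filter.mpr ⟨Finset.mem_univ j, hj⟩)
      have hl := hpos j hj
      nlinarith
    have hEntry : ∀ j : Fin k, (j : ℕ) < p →
        A j j = 1 ∧ ∀ b : Fin k, b ≠ j → A j b = 0 := by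
      intro j hj
      have h0 : (A j j - 1) ^ 2 + ∑ b ∈ Finset.univ.erase j, (A j b) ^ 2 = 0 :=
        hE0 j hj
      have hs : (0:ℝ) ≤ ∑ b ∈ Finset.univ.erase j, (A j b) ^ 2 :=
        Finset.sum_nonneg fun b _ => sq_nonneg _
      have hq : (0:ℝ) ≤ (A j j - 1) ^ 2 := sq_nonneg _
      have h1 : (A j j - 1) ^ 2 = 0 ∧
          ∑ b ∈ Finset.univ.erase j, (A j b) ^ 2 = 0 :=
        ⟨by linarith, by linarith⟩
      constructor
      · have := pow_eq_zero_iff (n := 2) (by norm_num) |>.mp h1.1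
        linarith [sub_eq_zero.mp this]
      · intro b hb
        have := (Finset.sum_eq_zero_iff_of_nonneg
          (fun b _ => sq_nonneg (A j b))).mp h1.2 b
          (Finset.mem_erase.mpr ⟨hb, Finset.mem_univ b⟩)
        exact pow_eq_zero_iff (n := 2) (by norm_num) |>.mp this
    constructor
    · intro a b ha hb
      by_cases hab : a = b
      · subst hab; simp [(hEntry a ha).1]
      · rw [if_neg hab]
        exact (hEntry a ha).2 b (fun h => hab h.symm)
    · intro a b ha hb
      refine (hEntry a ha).2 b ?_
      intro h
      rw [h] at hb
      omega
  · rintro ⟨h1, h2⟩ j hj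
    rw [Finset.mem_filter] at hj
    have hj' := hj.2
    have hEj : E j = 0 := by
      show (A j j - 1) ^ 2 + ∑ b ∈ Finset.univ.erase j, (A j b) ^ 2 = 0
      have hjj : A j j = 1 := by
        have := h1 j j hj' hj'
        simpa using this
      have hsum0 : ∑ b ∈ Finset.univ.erase j, (A j b) ^ 2 = 0 := by
        apply Finset.sum_eq_zero
        intro b hb
        have hbne : b ≠ j := (Finset.mem_erase.mp hb).1
        have : A j b = 0 := by
          by_cases hbp : (b : ℕ) < p
          · have := h1 j b hj' hbp
            rwa [if_neg (fun h => hbne h.symm)] at this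
          · exact h2 j b hj' (le_of_not_gt hbp)
        rw [this]; ring
      rw [hjj, hsum0]; ring
    rw [hEj]; ring
end

section
/- Let A ∈ ℝ^{k×k} be positive semidefinite and B ∈ ℝ^{k×k} be positive definite with generalized eigenvalues λ_1 ≥ ... ≥ λ_k (i.e. eigenvalues of B^{-1/2}AB^{-1/2}). Then for every W ∈ ℝ^{k×k}, trace(WᵀAW(2I_k − WᵀBW)) ≤ λ_1 + ... + λ_k, and equality holds whenever W satisfies WᵀBW = I_k. -/
/-!
Stack the eigenvectors `w j` as the rows of `V`. Then `V B Vᵀ = 1` and `V A Vᵀ = diag λ`, and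
`W = Vᵀ C` with `C = V B W`, so the objective becomes `tr(Cᵀ D C (2 - CᵀC))` with
`D = V A Vᵀ` positive semidefinite. Writing `P = C Cᵀ`, this equals
`tr D - tr((1 - P) D (1 - P))`, and the subtracted term is the trace of a positive semidefinite
matrix, vanishing when `CᵀC = 1`.
-/

open Matrix

namespace Matrix

variable {n R : Type*} [Fintype n] [CommRing R]

theorem of_mul_mul_transpose_apply (w : n → n → R) (B : Matrix n n R) (j l : n) :
    (of w * B * (of w)ᵀ) j l = w j ⬝ᵥ B *ᵥ w l := by
  rw [mul_mul_apply, transpose_transpose]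
  rfl

variable [DecidableEq n]

theorem trace_transpose_mul_mul_two_sub (C D : Matrix n n R) :
    (Cᵀ * D * C * (2 - Cᵀ * C)).trace =
      D.trace - ((1 - C * Cᵀ) * D * (1 - C * Cᵀ)).trace := by
  set P := C * Cᵀ
  have hexpand : Cᵀ * D * C * (2 - Cᵀ * C) = 2 • (Cᵀ * (D * C)) - Cᵀ * (D * P * C) := by
    simp only [P]; noncomm_ring
  have hresidual : (1 - P) * D * (1 - P) = D - P * D - D * P + P * (D * P) := by noncomm_ring
  rw [hexpand, hresidual, trace_sub, trace_smul, trace_add, trace_sub, trace_sub,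
    trace_mul_comm Cᵀ, trace_mul_comm Cᵀ, trace_mul_comm P (D * P), trace_mul_comm P D]
  simp only [P, Matrix.mul_assoc]
  ring

theorem PosSemidef.trace_transpose_mul_mul_two_sub_le {D : Matrix n n ℝ} (hD : D.PosSemidef)
    (C : Matrix n n ℝ) :
    (Cᵀ * D * C * (2 - Cᵀ * C)).trace ≤ D.trace := by
  have hsymm : (1 - C * Cᵀ)ᵀ = 1 - C * Cᵀ := by
    simp [transpose_sub, transpose_mul]
  have hres := (hD.mul_mul_conjTranspose_same (1 - C * Cᵀ)).trace_nonneg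
  rw [conjTranspose_eq_transpose_of_trivial, hsymm] at hres
  linarith [trace_transpose_mul_mul_two_sub C D]

theorem trace_transpose_mul_mul_two_sub_of_transpose_mul_self_eq_one
    {C : Matrix n n R} (hC : Cᵀ * C = 1) (D : Matrix n n R) :
    (Cᵀ * D * C * (2 - Cᵀ * C)).trace = D.trace := by
  rw [trace_transpose_mul_mul_two_sub, mul_eq_one_comm.mp hC]
  simp

theorem transpose_mul_mul_eq_of_mul_mul_transpose_eq_one {V B : Matrix n n R}
    (hV : V * B * Vᵀ = 1) (X W : Matrix n n R) :
    Wᵀ * X * W = (V * B * W)ᵀ * (V * X * Vᵀ) * (V * B * W) := by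
  have hW : Vᵀ * (V * B * W) = W := by
    rw [← Matrix.mul_assoc, mul_eq_one_comm.mp hV, Matrix.one_mul]
  conv_lhs => rw [← hW]
  simp only [transpose_mul, transpose_transpose, Matrix.mul_assoc]

end Matrix

theorem stmt7_general (k : ℕ) (A B : Matrix (Fin k) (Fin k) ℝ)
    (hA : A.PosSemidef)
    (lam : Fin k → ℝ) (w : Fin k → Fin k → ℝ)
    (horth : ∀ j l : Fin k, w j ⬝ᵥ B.mulVec (w l) = if j = l then 1 else 0)
    (heig : ∀ j : Fin k, A.mulVec (w j) = lam j • B.mulVec (w j)) :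
    (∀ W : Matrix (Fin k) (Fin k) ℝ,
        (Wᵀ * A * W * (2 - Wᵀ * B * W)).trace ≤ ∑ j : Fin k, lam j) ∧
    (∀ W : Matrix (Fin k) (Fin k) ℝ, Wᵀ * B * W = 1 →
        (Wᵀ * A * W * (2 - Wᵀ * B * W)).trace = ∑ j : Fin k, lam j) := by
  set V := of w
  have hVB : V * B * Vᵀ = 1 := by
    ext j l
    rw [of_mul_mul_transpose_apply, horth, one_apply]
  have hVA : V * A * Vᵀ = diagonal lam := by
    ext j l
    rw [of_mul_mul_transpose_apply, heig, dotProduct_smul, horth, diagonal_apply]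
    split_ifs with hjl <;> simp_all
  have hsum : ∑ j, lam j = (V * A * Vᵀ).trace := by rw [hVA, trace_diagonal]
  have hconj := transpose_mul_mul_eq_of_mul_mul_transpose_eq_one hVB
  refine ⟨fun W => ?_, fun W hW => ?_⟩
  · rw [hconj A W, hconj B W, hVB, Matrix.mul_one, hsum]
    exact (hA.mul_mul_conjTranspose_same V).trace_transpose_mul_mul_two_sub_le _
  · rw [hconj B W, hVB, Matrix.mul_one] at hW
    rw [hconj A W, hconj B W, hVB, Matrix.mul_one, hsum]
    exact trace_transpose_mul_mul_two_sub_of_transpose_mul_self_eq_one hW _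

/-- Square case: the unconstrained GEP objective is at most the sum of all generalized
eigenvalues, with equality for any B-orthonormal W. -/
theorem stmt7 (k : ℕ) (A B : Matrix (Fin k) (Fin k) ℝ)
    (hA : A.PosSemidef) (hB : B.PosDef)
    (lam : Fin k → ℝ) (w : Fin k → Fin k → ℝ)
    (horth : ∀ j l : Fin k, w j ⬝ᵥ B.mulVec (w l) = if j = l then 1 else 0)
    (heig : ∀ j : Fin k, A.mulVec (w j) = lam j • B.mulVec (w j))
    (hdec : ∀ j l : Fin k, j ≤ l → lam l ≤ lam j) :
    (∀ W : Matrix (Fin k) (Fin k) ℝ,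
        (Wᵀ * A * W * (2 - Wᵀ * B * W)).trace ≤ ∑ j : Fin k, lam j) ∧
    (∀ W : Matrix (Fin k) (Fin k) ℝ, Wᵀ * B * W = 1 →
        (Wᵀ * A * W * (2 - Wᵀ * B * W)).trace = ∑ j : Fin k, lam j) :=
  stmt7_general k A B hA lam w horth heig
end

section
/- Let A ∈ ℝ^{d×d} be positive semidefinite and B ∈ ℝ^{d×d} positive definite, and let λ_1 ≥ ... ≥ λ_d be the generalized eigenvalues of the pencil (A,B). Then max over W ∈ ℝ^{d×k} of trace(WᵀAW(2I_k − WᵀBW)) equals λ_1 + ... + λ_k. -/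
/-!
Let `M` be the matrix whose rows are the `B`-orthonormal eigenvectors `w j`, so that
`M B Mᵀ = 1` and `M A Mᵀ = diag λ`. Substituting `W = Mᵀ C` turns the objective into
`tr (Cᵀ Λ C (2 - Cᵀ C))`, which is invariant under `C ↦ C O` for orthogonal `O`; hence we may
assume that `Cᵀ C = diag μ`. Column by column, `h (2 - μ) ≤ h / μ` because `μ (2 - μ) ≤ 1`, and
the right-hand sides add up to `tr (Λ P)` for the orthogonal projection `P` onto the column
space of `C`. The diagonal of `P` lies in `[0, 1]` and its trace is at most `k`, so
`tr (Λ P) ≤ λ₁ + ⋯ + λₖ`. Equality holds at `W = (w₁ ⋯ wₖ)`.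
-/

open Matrix

lemma Fin.filter_val_lt_eq_map_castLEEmb {k d : ℕ} (hkd : k ≤ d) :
    Finset.univ.filter (fun j : Fin d => (j : ℕ) < k) = Finset.univ.map (Fin.castLEEmb hkd) := by
  ext j
  simp only [Finset.mem_filter, Finset.mem_univ, true_and, Finset.mem_map, Fin.coe_castLEEmb]
  exact ⟨fun h => ⟨⟨j, h⟩, rfl⟩, by rintro ⟨i, rfl⟩; exact i.2⟩

lemma sum_mul_le_sum_of_threshold {ι : Type*} [Fintype ι] {lam t : ι → ℝ} {S : Finset ι} {a : ℝ}
    (ha : 0 ≤ a) (hS : ∀ j ∈ S, a ≤ lam j) (hSc : ∀ j ∉ S, lam j ≤ a)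
    (ht : ∀ j, t j ∈ Set.Icc 0 1) (hsum : ∑ j, t j ≤ S.card) :
    ∑ j, lam j * t j ≤ ∑ j ∈ S, lam j := by
  classical
  have hterm : ∀ j, lam j * t j - (if j ∈ S then lam j else 0)
      ≤ a * t j - (if j ∈ S then a else 0) := by
    intro j
    split_ifs with hj
    · nlinarith [hS j hj, (ht j).2]
    · nlinarith [hSc j hj, (ht j).1]
  have := Finset.sum_le_sum fun j (_ : j ∈ Finset.univ) => hterm j
  simp only [Finset.sum_sub_distrib, Finset.sum_ite_mem, Finset.univ_inter, ← Finset.mul_sum,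
    Finset.sum_const, nsmul_eq_mul] at this
  nlinarith

lemma sum_mul_le_sum_filter_val_lt {d k : ℕ} (hkd : k ≤ d) {lam t : Fin d → ℝ} (hlam : 0 ≤ lam)
    (hanti : Antitone lam) (ht : ∀ j, t j ∈ Set.Icc 0 1) (hsum : ∑ j, t j ≤ k) :
    ∑ j, lam j * t j ≤ ∑ j ∈ Finset.univ.filter (fun j : Fin d => (j : ℕ) < k), lam j := by
  -- the threshold is the largest `lam j` with `j ≥ k`
  refine sum_mul_le_sum_of_threshold (a := if h : k < d then lam ⟨k, h⟩ else 0) ?_ ?_ ?_ ht ?_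
  · split_ifs
    exacts [hlam _, le_rfl]
  · intro j hj
    rw [Finset.mem_filter] at hj
    split_ifs with h
    exacts [hanti (Fin.mk_le_of_le_val hj.2.le), hlam j]
  · intro j hj
    rw [Finset.mem_filter, not_and, not_lt] at hj
    have hk : k < d := (hj (Finset.mem_univ j)).trans_lt j.2
    rw [dif_pos hk]
    exact hanti (Fin.le_iff_val_le_val.mpr (hj (Finset.mem_univ j)))
  · rwa [Fin.filter_val_lt_eq_map_castLEEmb hkd, Finset.card_map, Finset.card_univ,
      Fintype.card_fin]

lemma mul_two_sub_le_mul_inv {h μ : ℝ} (hh : 0 ≤ h) (hμ : 0 ≤ μ) (h0 : μ = 0 → h = 0) :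
    h * (2 - μ) ≤ h * μ⁻¹ := by
  rcases hμ.eq_or_lt with rfl | hpos
  · simp [h0 rfl]
  · rw [le_mul_inv_iff₀ hpos]
    nlinarith [mul_nonneg hh (sq_nonneg (μ - 1))]

lemma Matrix.diag_mem_Icc_of_transpose_mul_self_eq {n : Type*} [Fintype n] {P : Matrix n n ℝ}
    (hP : Pᵀ * P = P) (j : n) : P j j ∈ Set.Icc 0 1 := by
  have hjj : P j j = ∑ l, P l j ^ 2 := by
    conv_lhs => rw [← hP]
    simp only [mul_apply, transpose_apply, sq]
  have hsq : P j j ^ 2 ≤ P j j :=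
    hjj ▸ Finset.single_le_sum (f := fun l => P l j ^ 2) (fun l _ => sq_nonneg _)
      (Finset.mem_univ j)
  have hnonneg : 0 ≤ P j j := hjj ▸ Finset.sum_nonneg fun l _ => sq_nonneg _
  exact ⟨hnonneg, by nlinarith⟩

lemma Matrix.transpose_mul_diagonal_mul_apply_self {n m : Type*} [Fintype n] [DecidableEq n]
    (lam : n → ℝ) (D : Matrix n m ℝ) (i : m) :
    (Dᵀ * diagonal lam * D) i i = ∑ j, lam j * D j i ^ 2 := by
  rw [Matrix.mul_assoc, mul_apply]
  simp only [transpose_apply, diagonal_mul]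
  exact Finset.sum_congr rfl fun j _ => by ring

lemma Matrix.exists_orthogonal_transpose_mul_self_eq_diagonal {n m : Type*} [Fintype n]
    [Fintype m] [DecidableEq m] (C : Matrix n m ℝ) :
    ∃ O : Matrix m m ℝ, Oᵀ * O = 1 ∧ ∃ μ : m → ℝ, (C * O)ᵀ * (C * O) = diagonal μ := by
  have hG : (Cᵀ * C).IsHermitian := by
    simpa only [conjTranspose_eq_transpose_of_trivial] using isHermitian_conjTranspose_mul_self C
  have hstar : star (hG.eigenvectorUnitary : Matrix m m ℝ) =
      (hG.eigenvectorUnitary : Matrix m m ℝ)ᵀ := by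
    rw [star_eq_conjTranspose, conjTranspose_eq_transpose_of_trivial]
  refine ⟨hG.eigenvectorUnitary, ?_, hG.eigenvalues, ?_⟩
  · rw [← hstar, Unitary.coe_star_mul_self]
  · have h := hG.conjStarAlgAut_star_eigenvectorUnitary
    rw [Unitary.conjStarAlgAut_star_apply, hstar] at h
    rw [transpose_mul, Matrix.mul_assoc, ← Matrix.mul_assoc Cᵀ, ← Matrix.mul_assoc, h]
    rfl

section OrthogonalColumns

/- Since `0⁻¹ = 0`, `D * diagonal μ⁻¹ * Dᵀ` is the orthogonal projection onto the column space
of `D` even when some columns of `D` vanish. -/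

variable {n m : Type*} [Fintype n] [Fintype m] [DecidableEq m] {D : Matrix n m ℝ} {μ : m → ℝ}

lemma Matrix.transpose_mul_self_mul_diagonal_inv_mul_transpose (hD : Dᵀ * D = diagonal μ) :
    (D * diagonal μ⁻¹ * Dᵀ)ᵀ * (D * diagonal μ⁻¹ * Dᵀ) = D * diagonal μ⁻¹ * Dᵀ := by
  have hsymm : (D * diagonal μ⁻¹ * Dᵀ)ᵀ = D * diagonal μ⁻¹ * Dᵀ := by
    simp only [transpose_mul, transpose_transpose, diagonal_transpose, Matrix.mul_assoc]
  calc (D * diagonal μ⁻¹ * Dᵀ)ᵀ * (D * diagonal μ⁻¹ * Dᵀ)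
      = D * (diagonal μ⁻¹ * (Dᵀ * D) * diagonal μ⁻¹) * Dᵀ := by
        rw [hsymm]; simp only [Matrix.mul_assoc]
    _ = D * diagonal μ⁻¹ * Dᵀ := by
        rw [hD, diagonal_mul_diagonal, diagonal_mul_diagonal]
        congr 3
        funext i
        simpa using mul_inv_mul_cancel (μ i)⁻¹

lemma Matrix.trace_mul_diagonal_inv_mul_transpose_le (hD : Dᵀ * D = diagonal μ) :
    (D * diagonal μ⁻¹ * Dᵀ).trace ≤ Fintype.card m := by
  rw [trace_mul_cycle, hD, diagonal_mul_diagonal, trace_diagonal]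
  calc ∑ i, μ i * μ⁻¹ i ≤ ∑ _i : m, (1 : ℝ) := Finset.sum_le_sum fun i _ => by
        by_cases h : μ i = 0 <;> simp [h]
    _ = Fintype.card m := by simp

end OrthogonalColumns

section Objective

variable {n m : Type*} [Fintype n] [Fintype m] [DecidableEq m]

def gepObjective (A B : Matrix n n ℝ) (W : Matrix n m ℝ) : ℝ :=
  (Wᵀ * A * W * (2 - Wᵀ * B * W)).trace

lemma gepObjective_mul_left {n' : Type*} [Fintype n'] (A B : Matrix n' n' ℝ) (P : Matrix n' n ℝ)
    (W : Matrix n m ℝ) :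
    gepObjective A B (P * W) = gepObjective (Pᵀ * A * P) (Pᵀ * B * P) W := by
  simp only [gepObjective, transpose_mul, Matrix.mul_assoc]

lemma gepObjective_mul_orthogonal (A B : Matrix n n ℝ) (W : Matrix n m ℝ)
    {O : Matrix m m ℝ} (hO : Oᵀ * O = 1) : gepObjective A B (W * O) = gepObjective A B W := by
  have hO' : O * Oᵀ = 1 := mul_eq_one_comm.mp hO
  have hconj : ∀ X : Matrix n n ℝ, (W * O)ᵀ * X * (W * O) = Oᵀ * (Wᵀ * X * W) * O := by
    intro X; simp only [transpose_mul, Matrix.mul_assoc]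
  have hsub : 2 - Oᵀ * (Wᵀ * B * W) * O = Oᵀ * (2 - Wᵀ * B * W) * O := by
    rw [Matrix.mul_sub, Matrix.sub_mul, mul_two, Matrix.add_mul, hO, one_add_one_eq_two]
  calc gepObjective A B (W * O)
      = (Oᵀ * (Wᵀ * A * W * (O * Oᵀ) * (2 - Wᵀ * B * W)) * O).trace := by
        rw [gepObjective, hconj, hconj, hsub]; simp only [Matrix.mul_assoc]
    _ = gepObjective A B W := by
        rw [hO', Matrix.mul_one, trace_mul_cycle, hO', Matrix.one_mul, gepObjective]

lemma gepObjective_eq_sum_of_eq_diagonal {A B : Matrix n n ℝ} {W : Matrix n m ℝ} {ν : m → ℝ}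
    (hA : Wᵀ * A * W = diagonal ν) (hB : Wᵀ * B * W = 1) : gepObjective A B W = ∑ i, ν i := by
  rw [gepObjective, hA, hB, show (2 - 1 : Matrix m m ℝ) = 1 by norm_num, Matrix.mul_one,
    trace_diagonal]

variable [DecidableEq n]

lemma gepObjective_eq_gepObjective_diagonal_one {A B M : Matrix n n ℝ} {lam : n → ℝ}
    (hMA : M * A * Mᵀ = diagonal lam) (hMB : M * B * Mᵀ = 1) (W : Matrix n m ℝ) :
    gepObjective A B W = gepObjective (diagonal lam) 1 (M * B * W) := by
  have hW : Mᵀ * (M * B * W) = W := by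
    rw [← Matrix.mul_assoc, ← Matrix.mul_assoc, Matrix.mul_assoc _ M, mul_eq_one_comm.mp hMB,
      Matrix.one_mul]
  conv_lhs => rw [← hW]
  rw [gepObjective_mul_left, transpose_transpose, hMA, hMB]

lemma gepObjective_transpose_submatrix {A B M : Matrix n n ℝ} {lam : n → ℝ}
    (hMA : M * A * Mᵀ = diagonal lam) (hMB : M * B * Mᵀ = 1) {e : m → n}
    (he : Function.Injective e) : gepObjective A B (Mᵀ.submatrix id e) = ∑ i, lam (e i) := by
  refine gepObjective_eq_sum_of_eq_diagonal ?_ ?_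
  · change (M * A * Mᵀ).submatrix e e = _
    rw [hMA, submatrix_diagonal _ _ he]
    rfl
  · change (M * B * Mᵀ).submatrix e e = _
    rw [hMB, submatrix_one _ he]

lemma gepObjective_diagonal_one_le_trace {D : Matrix n m ℝ} {μ : m → ℝ} {lam : n → ℝ}
    (hlam : 0 ≤ lam) (hD : Dᵀ * D = diagonal μ) :
    gepObjective (diagonal lam) 1 D ≤ (diagonal lam * (D * diagonal μ⁻¹ * Dᵀ)).trace := by
  have hcol : ∀ i, μ i = ∑ j, D j i ^ 2 := fun i => by
    simpa [hD] using transpose_mul_diagonal_mul_apply_self 1 D i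
  have hrhs : (diagonal lam * (D * diagonal μ⁻¹ * Dᵀ)).trace
      = ∑ i, (Dᵀ * diagonal lam * D) i i * μ⁻¹ i := by
    rw [← Matrix.mul_assoc, ← Matrix.mul_assoc, trace_mul_comm, ← Matrix.mul_assoc,
      ← Matrix.mul_assoc]
    simp [trace, mul_diagonal]
  rw [gepObjective, Matrix.mul_one, hD, ← diagonal_ofNat, diagonal_sub, trace, hrhs]
  refine Finset.sum_le_sum fun i _ => ?_
  rw [diag_apply, mul_diagonal, transpose_mul_diagonal_mul_apply_self, Pi.inv_apply]
  refine mul_two_sub_le_mul_inv (Finset.sum_nonneg fun j _ => mul_nonneg (hlam j) (sq_nonneg _))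
    (hcol i ▸ Finset.sum_nonneg fun j _ => sq_nonneg _) fun hμ => ?_
  have hzero := (Finset.sum_eq_zero_iff_of_nonneg fun j _ => sq_nonneg (D j i)).mp (hcol i ▸ hμ)
  have hDi : ∀ j, D j i = 0 := fun j =>
    pow_eq_zero_iff two_ne_zero |>.mp (hzero j (Finset.mem_univ j))
  simp [hDi]

end Objective

lemma gepObjective_diagonal_one_le {d k : ℕ} (hkd : k ≤ d) {lam : Fin d → ℝ} (hlam : 0 ≤ lam)
    (hanti : Antitone lam) (C : Matrix (Fin d) (Fin k) ℝ) :
    gepObjective (diagonal lam) 1 C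
      ≤ ∑ j ∈ Finset.univ.filter (fun j : Fin d => (j : ℕ) < k), lam j := by
  obtain ⟨O, hO, μ, hD⟩ := exists_orthogonal_transpose_mul_self_eq_diagonal C
  set P := C * O * diagonal μ⁻¹ * (C * O)ᵀ
  have hP : ∀ j, P j j ∈ Set.Icc 0 1 :=
    diag_mem_Icc_of_transpose_mul_self_eq (transpose_mul_self_mul_diagonal_inv_mul_transpose hD)
  have htrace : P.trace ≤ k := by
    simpa only [Fintype.card_fin] using trace_mul_diagonal_inv_mul_transpose_le hD
  calc gepObjective (diagonal lam) 1 C = gepObjective (diagonal lam) 1 (C * O) :=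
        (gepObjective_mul_orthogonal _ _ _ hO).symm
    _ ≤ (diagonal lam * P).trace := gepObjective_diagonal_one_le_trace hlam hD
    _ = ∑ j, lam j * P j j := by simp [trace, diagonal_mul]
    _ ≤ _ := sum_mul_le_sum_filter_val_lt hkd hlam hanti hP htrace

section Eigenbasis

variable {n : Type*} [Fintype n] [DecidableEq n] {A B : Matrix n n ℝ} {w : n → n → ℝ}

lemma Matrix.of_mul_mul_transpose_eq_one
    (horth : ∀ j l, w j ⬝ᵥ B *ᵥ w l = if j = l then 1 else 0) : of w * B * (of w)ᵀ = 1 :=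
  ext fun j l => by
    rw [mul_mul_apply, one_apply]
    exact horth j l

lemma Matrix.of_mul_mul_transpose_eq_diagonal {lam : n → ℝ}
    (horth : ∀ j l, w j ⬝ᵥ B *ᵥ w l = if j = l then 1 else 0)
    (heig : ∀ j, A *ᵥ w j = lam j • B *ᵥ w j) : of w * A * (of w)ᵀ = diagonal lam :=
  ext fun j l => by
    rw [mul_mul_apply]
    change w j ⬝ᵥ A *ᵥ w l = _
    rw [heig, dotProduct_smul, horth, diagonal_apply, smul_eq_mul, mul_ite, mul_one, mul_zero]
    split_ifs with h
    · rw [h]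
    · rfl

end Eigenbasis

theorem stmt9_general (d k : ℕ) (hkd : k ≤ d) (A B : Matrix (Fin d) (Fin d) ℝ)
    (hA : A.PosSemidef)
    (lam : Fin d → ℝ) (w : Fin d → Fin d → ℝ)
    (horth : ∀ j l : Fin d, w j ⬝ᵥ B.mulVec (w l) = if j = l then 1 else 0)
    (heig : ∀ j : Fin d, A.mulVec (w j) = lam j • B.mulVec (w j))
    (hdec : ∀ j l : Fin d, j ≤ l → lam l ≤ lam j) :
    IsGreatest
      (Set.range fun W : Matrix (Fin d) (Fin k) ℝ =>
        (Wᵀ * A * W * (2 - Wᵀ * B * W)).trace)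
      (∑ j ∈ Finset.univ.filter (fun j : Fin d => (j : ℕ) < k), lam j) := by
  have hMB := of_mul_mul_transpose_eq_one horth
  have hMA := of_mul_mul_transpose_eq_diagonal horth heig
  have hlam : 0 ≤ lam := fun j => by
    have := (hA.mul_mul_conjTranspose_same (of w)).diag_nonneg (i := j)
    rwa [conjTranspose_eq_transpose_of_trivial, hMA, diagonal_apply_eq] at this
  constructor
  · refine ⟨(of w)ᵀ.submatrix id (Fin.castLE hkd), ?_⟩
    rw [Fin.filter_val_lt_eq_map_castLEEmb hkd, Finset.sum_map]
    exact gepObjective_transpose_submatrix hMA hMB (Fin.castLE_injective hkd)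
  · rintro _ ⟨W, rfl⟩
    change gepObjective A B W ≤ _
    rw [gepObjective_eq_gepObjective_diagonal_one hMA hMB]
    exact gepObjective_diagonal_one_le hkd hlam (fun j l => hdec j l) _

/-- The unconstrained subspace characterisation: the maximum of the GEP objective over
all d×k matrices equals the sum of the top-k generalized eigenvalues. -/
theorem stmt9 (d k : ℕ) (hkd : k ≤ d) (A B : Matrix (Fin d) (Fin d) ℝ)
    (hA : A.PosSemidef) (hB : B.PosDef)
    (lam : Fin d → ℝ) (w : Fin d → Fin d → ℝ)
    (horth : ∀ j l : Fin d, w j ⬝ᵥ B.mulVec (w l) = if j = l then 1 else 0)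
    (heig : ∀ j : Fin d, A.mulVec (w j) = lam j • B.mulVec (w j))
    (hdec : ∀ j l : Fin d, j ≤ l → lam l ≤ lam j) :
    IsGreatest
      (Set.range fun W : Matrix (Fin d) (Fin k) ℝ =>
        (Wᵀ * A * W * (2 - Wᵀ * B * W)).trace)
      (∑ j ∈ Finset.univ.filter (fun j : Fin d => (j : ℕ) < k), lam j) :=
  stmt9_general d k hkd A B hA lam w horth heig hdec
end

section
/- Let A, B be symmetric d×d matrices with B positive definite, let w^{(1)},...,w^{(d)} be B-orthonormal generalized eigenvectors of (A,B) with distinct positive top-i eigenvalues λ^{(1)} > ... > λ^{(i)} > 0 ≥ λ^{(i+1)},... Define for ŵ ∈ ℝ^d the utility U(ŵ) = 2⟨ŵ, Aŵ⟩ − max(⟨ŵ, Aŵ⟩, 0)·⟨ŵ, Bŵ⟩ − 2Σ_{j<i}⟨ŵ, Bw^{(j)}⟩⟨w^{(j)}, Aŵ⟩. Then U is maximized precisely at ŵ = ±w^{(i)}, with maximal value λ^{(i)}. -/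
open Matrix Finset

/-!
Expand `v = ∑ⱼ cⱼ • w⁽ʲ⁾` in the `B`-orthonormal eigenbasis, `cⱼ = ⟨w⁽ʲ⁾, Bv⟩`. Then
`⟨v, Av⟩ = a := ∑ λⱼ cⱼ²`, `⟨v, Bv⟩ = s := ∑ cⱼ²`, and the parent penalty is
`p := ∑_{j<i} λⱼ cⱼ² ≥ 0`.
Since `λⱼ ≤ 0` for `j > i`, `a ≤ p + λᵢ cᵢ²`. When `a ≤ 0` or `s > 2` the utility is at most `0`.
Otherwise `λᵢ - U ≥ λᵢ (1 - cᵢ²)² + λᵢ cᵢ² (s - cᵢ²)`, so `U ≤ λᵢ`, and equality forces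
`cᵢ² = s = 1`, i.e. `v = ±w⁽ⁱ⁾`.
-/

section Coordinates

variable {ι n R : Type*} [Fintype ι] [DecidableEq ι] [Fintype n] [CommSemiring R]
  {M : Matrix n n R} {w : ι → n → R} {μ : ι → R}

theorem dotProduct_mulVec_sum_smul
    (hw : ∀ j l, w j ⬝ᵥ M *ᵥ w l = if j = l then μ l else 0) (c : ι → R) (l : ι) :
    w l ⬝ᵥ M *ᵥ ∑ j, c j • w j = μ l * c l := by
  simp [mulVec_sum, mulVec_smul, dotProduct_sum, dotProduct_smul, hw, mul_comm]

theorem sum_smul_dotProduct_mulVec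
    (hw : ∀ j l, w j ⬝ᵥ M *ᵥ w l = if j = l then μ l else 0) (c : ι → R) (l : ι) :
    (∑ j, c j • w j) ⬝ᵥ M *ᵥ w l = c l * μ l := by
  simp [sum_dotProduct, smul_dotProduct, hw]

theorem sum_smul_dotProduct_mulVec_sum_smul
    (hw : ∀ j l, w j ⬝ᵥ M *ᵥ w l = if j = l then μ l else 0) (c : ι → R) :
    (∑ j, c j • w j) ⬝ᵥ M *ᵥ ∑ j, c j • w j = ∑ j, μ j * c j ^ 2 := by
  simp only [sum_dotProduct, smul_dotProduct, dotProduct_mulVec_sum_smul hw, smul_eq_mul]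
  exact sum_congr rfl fun j _ => by ring

end Coordinates

theorem dotProduct_mulVec_eq_ite_of_mulVec_eq_smul {ι n R : Type*} [Fintype n] [DecidableEq ι]
    [CommSemiring R] {A B : Matrix n n R} {w : ι → n → R} {lam : ι → R}
    (horth : ∀ j l, w j ⬝ᵥ B *ᵥ w l = if j = l then 1 else 0)
    (heig : ∀ j, A *ᵥ w j = lam j • B *ᵥ w j) (j l : ι) :
    w j ⬝ᵥ A *ᵥ w l = if j = l then lam l else 0 := by
  simp [heig, dotProduct_smul, horth]

theorem eq_sum_dotProduct_mulVec_smul {n R : Type*} [Fintype n] [DecidableEq n] [CommRing R]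
    {B : Matrix n n R} {w : n → n → R}
    (horth : ∀ j l, w j ⬝ᵥ B *ᵥ w l = if j = l then 1 else 0) (v : n → R) :
    v = ∑ j, (w j ⬝ᵥ B *ᵥ v) • w j := by
  set W : Matrix n n R := Matrix.of w
  have hW : W * B * Wᵀ = 1 := by
    ext j l
    rw [mul_mul_apply, one_apply, ← horth]
    rfl
  have hW' : Wᵀ * (W * B) = 1 := mul_eq_one_comm.mp hW
  calc v = Wᵀ *ᵥ (W *ᵥ (B *ᵥ v)) := by
        rw [mulVec_mulVec, mulVec_mulVec, Matrix.mul_assoc, hW', one_mulVec]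
    _ = ∑ j, (w j ⬝ᵥ B *ᵥ v) • w j := by rw [mulVec_transpose, vecMul_eq_sum]; rfl

theorem sum_le_sum_filter_lt_add {ι M : Type*} [Fintype ι] [LinearOrder ι] [AddCommMonoid M]
    [Preorder M] [AddLeftMono M] (f : ι → M) (i : ι) (h : ∀ j, i < j → f j ≤ 0) :
    ∑ j, f j ≤ ∑ j ∈ univ.filter (· < i), f j + f i :=
  calc ∑ j, f j ≤ ∑ j ∈ insert i (univ.filter (· < i)), f j :=
        sum_le_sum_of_subset_of_nonpos' (subset_univ _) fun j _ hj => h j <| by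
          simp only [mem_insert, mem_filter, mem_univ, true_and, not_or, not_lt] at hj
          exact lt_of_le_of_ne hj.2 (Ne.symm hj.1)
    _ = _ := by rw [sum_insert (by simp), add_comm]

/-- The utility `2⟨v, Av⟩ - max(⟨v, Av⟩, 0)⟨v, Bv⟩ - 2 p` of the δ-EigenGame, as a function of
`a = ⟨v, Av⟩`, `s = ⟨v, Bv⟩` and the penalty `p` paid to the parents. -/
def eigenGameUtility (a s p : ℝ) : ℝ := 2 * a - max a 0 * s - 2 * p

section EigenGameUtility

variable {a s p l t : ℝ}

/-- `t` stands for the squared coordinate of `v` along the target eigenvector, of eigenvalue `l`. -/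
theorem eigenGameUtility_lt_or_le_sub (hl : 0 < l) (hp : 0 ≤ p) (ht : 0 ≤ t) (hts : t ≤ s)
    (ha : a ≤ p + l * t) :
    eigenGameUtility a s p < l ∨ eigenGameUtility a s p ≤ l - l * ((1 - t) ^ 2 + t * (s - t)) := by
  unfold eigenGameUtility
  rcases le_or_gt a 0 with ha0 | ha0
  · left
    rw [max_eq_right ha0]
    linarith
  rw [max_eq_left ha0.le]
  rcases le_or_gt s 2 with hs2 | hs2
  · right
    have hgap : 0 ≤ (2 - s) * (p + l * t - a) := mul_nonneg (by linarith) (by linarith)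
    have hpen : 0 ≤ p * s := mul_nonneg hp (by linarith)
    nlinarith
  · left
    nlinarith

theorem eigenGameUtility_le (hl : 0 < l) (hp : 0 ≤ p) (ht : 0 ≤ t) (hts : t ≤ s)
    (ha : a ≤ p + l * t) : eigenGameUtility a s p ≤ l := by
  have : 0 ≤ l * ((1 - t) ^ 2 + t * (s - t)) :=
    mul_nonneg hl.le (add_nonneg (sq_nonneg _) (mul_nonneg ht (by linarith)))
  rcases eigenGameUtility_lt_or_le_sub hl hp ht hts ha with h | h <;> linarith

theorem eq_one_of_eigenGameUtility_eq (hl : 0 < l) (hp : 0 ≤ p) (ht : 0 ≤ t) (hts : t ≤ s)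
    (ha : a ≤ p + l * t) (h : eigenGameUtility a s p = l) : t = 1 ∧ s = 1 := by
  have hsq : 0 ≤ (1 - t) ^ 2 := sq_nonneg _
  have hcross : 0 ≤ t * (s - t) := mul_nonneg ht (by linarith)
  have hdef : (1 - t) ^ 2 + t * (s - t) ≤ 0 := by
    rcases eigenGameUtility_lt_or_le_sub hl hp ht hts ha with h' | h'
    · linarith
    · nlinarith
  have ht1 : t = 1 := by nlinarith
  subst ht1
  exact ⟨rfl, by nlinarith⟩

end EigenGameUtility

section Spectral

variable {ι : Type*} [Fintype ι] [LinearOrder ι] {lam : ι → ℝ} {i : ι}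

theorem eigenGameUtility_sum_le (hpar : ∀ j, j < i → 0 ≤ lam j) (hpos : 0 < lam i)
    (hrest : ∀ j, i < j → lam j ≤ 0) (c : ι → ℝ) :
    eigenGameUtility (∑ j, lam j * c j ^ 2) (∑ j, c j ^ 2)
      (∑ j ∈ univ.filter (· < i), lam j * c j ^ 2) ≤ lam i :=
  eigenGameUtility_le hpos
    (sum_nonneg fun j hj => mul_nonneg (hpar j (mem_filter.1 hj).2) (sq_nonneg _))
    (sq_nonneg (c i)) (single_le_sum (fun j _ => sq_nonneg (c j)) (mem_univ i))
    (sum_le_sum_filter_lt_add _ i fun j hj =>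
      mul_nonpos_of_nonpos_of_nonneg (hrest j hj) (sq_nonneg _))

theorem eigenGameUtility_sum_eq_iff (hpar : ∀ j, j < i → 0 ≤ lam j) (hpos : 0 < lam i)
    (hrest : ∀ j, i < j → lam j ≤ 0) (c : ι → ℝ) :
    eigenGameUtility (∑ j, lam j * c j ^ 2) (∑ j, c j ^ 2)
      (∑ j ∈ univ.filter (· < i), lam j * c j ^ 2) = lam i ↔
      ∀ j, c j ^ 2 = if j = i then 1 else 0 := by
  constructor
  · intro h
    obtain ⟨hci, hs⟩ := eq_one_of_eigenGameUtility_eq hpos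
      (sum_nonneg fun j hj => mul_nonneg (hpar j (mem_filter.1 hj).2) (sq_nonneg _))
      (sq_nonneg (c i)) (single_le_sum (fun j _ => sq_nonneg (c j)) (mem_univ i))
      (sum_le_sum_filter_lt_add _ i fun j hj =>
        mul_nonpos_of_nonpos_of_nonneg (hrest j hj) (sq_nonneg _)) h
    have hoff : ∑ j ∈ univ.erase i, c j ^ 2 = 0 := by
      linarith [add_sum_erase univ (fun j => c j ^ 2) (mem_univ i)]
    intro j
    split_ifs with hj
    · rw [hj, hci]
    · exact (sum_eq_zero_iff_of_nonneg fun k _ => sq_nonneg (c k)).1 hoff j (by simp [hj])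
  · intro h
    simp only [h, mul_ite, mul_one, mul_zero, sum_ite_eq', mem_univ, if_true, mem_filter,
      lt_irrefl, and_false, if_false]
    rw [eigenGameUtility, max_eq_left hpos.le]
    ring

end Spectral

section BOrthonormal

variable {n : Type*} [Fintype n] [LinearOrder n] {A B : Matrix n n ℝ} {w : n → n → ℝ}
  {lam : n → ℝ}

theorem eigenGameUtility_eq_sum (horth : ∀ j l, w j ⬝ᵥ B *ᵥ w l = if j = l then 1 else 0)
    (heig : ∀ j, A *ᵥ w j = lam j • B *ᵥ w j) (i : n) (v : n → ℝ) :
    eigenGameUtility (v ⬝ᵥ A *ᵥ v) (v ⬝ᵥ B *ᵥ v)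
        (∑ j ∈ univ.filter (· < i), (v ⬝ᵥ B *ᵥ w j) * (w j ⬝ᵥ A *ᵥ v)) =
      eigenGameUtility (∑ j, lam j * (w j ⬝ᵥ B *ᵥ v) ^ 2) (∑ j, (w j ⬝ᵥ B *ᵥ v) ^ 2)
        (∑ j ∈ univ.filter (· < i), lam j * (w j ⬝ᵥ B *ᵥ v) ^ 2) := by
  have hA := dotProduct_mulVec_eq_ite_of_mulVec_eq_smul horth heig
  set c := fun j => w j ⬝ᵥ B *ᵥ v
  have hv : v = ∑ j, c j • w j := eq_sum_dotProduct_mulVec_smul horth v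
  conv_lhs => rw [hv]
  rw [sum_smul_dotProduct_mulVec_sum_smul hA,
    sum_smul_dotProduct_mulVec_sum_smul (μ := fun _ => 1) horth]
  simp only [sum_smul_dotProduct_mulVec (μ := fun _ => 1) horth, dotProduct_mulVec_sum_smul hA,
    one_mul, mul_one]
  congr 1
  exact sum_congr rfl fun j _ => by ring

theorem sq_dotProduct_mulVec_eq_ite_iff
    (horth : ∀ j l, w j ⬝ᵥ B *ᵥ w l = if j = l then 1 else 0) (i : n) (v : n → ℝ) :
    (∀ j, (w j ⬝ᵥ B *ᵥ v) ^ 2 = if j = i then 1 else 0) ↔ v = w i ∨ v = -w i := by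
  constructor
  · intro h
    have hv : v = (w i ⬝ᵥ B *ᵥ v) • w i := by
      conv_lhs => rw [eq_sum_dotProduct_mulVec_smul horth v]
      refine sum_eq_single i (fun j _ hj => ?_) (by simp)
      rw [show w j ⬝ᵥ B *ᵥ v = 0 by simpa [hj] using h j, zero_smul]
    have hi : (w i ⬝ᵥ B *ᵥ v) ^ 2 = 1 := by simpa using h i
    rcases sq_eq_one_iff.1 hi with hi | hi
    · exact .inl (by rw [hv, hi, one_smul])
    · exact .inr (by rw [hv, hi, neg_one_smul])
  · rintro (rfl | rfl) j <;> by_cases hj : j = i <;> simp [horth, hj, mulVec_neg, dotProduct_neg]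

end BOrthonormal

theorem stmt14_general (d : ℕ) (A B : Matrix (Fin d) (Fin d) ℝ)
    (lam : Fin d → ℝ) (w : Fin d → Fin d → ℝ)
    (horth : ∀ j l : Fin d, w j ⬝ᵥ B.mulVec (w l) = if j = l then 1 else 0)
    (heig : ∀ j : Fin d, A.mulVec (w j) = lam j • B.mulVec (w j))
    (i : Fin d)
    (hstrict : ∀ j l : Fin d, j < l → l ≤ i → lam l < lam j)
    (hpos : 0 < lam i)
    (hrest : ∀ j : Fin d, i < j → lam j ≤ 0) :
    let U : (Fin d → ℝ) → ℝ := fun v =>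
      2 * (v ⬝ᵥ A.mulVec v) - max (v ⬝ᵥ A.mulVec v) 0 * (v ⬝ᵥ B.mulVec v)
        - 2 * ∑ j ∈ Finset.univ.filter (fun j : Fin d => j < i),
            (v ⬝ᵥ B.mulVec (w j)) * (w j ⬝ᵥ A.mulVec v)
    (∀ v : Fin d → ℝ, U v ≤ lam i) ∧
    (∀ v : Fin d → ℝ, U v = lam i ↔ v = w i ∨ v = -w i) := by
  intro U
  have hU : ∀ v, U v = _ := fun v => eigenGameUtility_eq_sum horth heig i v
  have hpar : ∀ j, j < i → 0 ≤ lam j := fun j hj => (hpos.trans (hstrict j i hj le_rfl)).le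
  refine ⟨fun v => ?_, fun v => ?_⟩
  · rw [hU]
    exact eigenGameUtility_sum_le hpar hpos hrest _
  · rw [hU, eigenGameUtility_sum_eq_iff hpar hpos hrest, sq_dotProduct_mulVec_eq_ite_iff horth]

/-- The δ-EigenGame utility (with exact parents) is maximized precisely at ±w⁽ⁱ⁾,
with maximal value λ⁽ⁱ⁾. -/
theorem stmt14 (d : ℕ) (A B : Matrix (Fin d) (Fin d) ℝ)
    (hA : A.IsSymm) (hB : B.PosDef)
    (lam : Fin d → ℝ) (w : Fin d → Fin d → ℝ)
    (horth : ∀ j l : Fin d, w j ⬝ᵥ B.mulVec (w l) = if j = l then 1 else 0)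
    (heig : ∀ j : Fin d, A.mulVec (w j) = lam j • B.mulVec (w j))
    (i : Fin d)
    (hstrict : ∀ j l : Fin d, j < l → l ≤ i → lam l < lam j)
    (hpos : 0 < lam i)
    (hrest : ∀ j : Fin d, i < j → lam j ≤ 0) :
    let U : (Fin d → ℝ) → ℝ := fun v =>
      2 * (v ⬝ᵥ A.mulVec v) - max (v ⬝ᵥ A.mulVec v) 0 * (v ⬝ᵥ B.mulVec v)
        - 2 * ∑ j ∈ Finset.univ.filter (fun j : Fin d => j < i),
            (v ⬝ᵥ B.mulVec (w j)) * (w j ⬝ᵥ A.mulVec v)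
    (∀ v : Fin d → ℝ, U v ≤ lam i) ∧
    (∀ v : Fin d → ℝ, U v = lam i ↔ v = w i ∨ v = -w i) :=
  stmt14_general d A B lam w horth heig i hstrict hpos hrest
end

section
/- Let Λ = diag(λ^{(1)},...,λ^{(d)}) with λ^{(1)} > ... > λ^{(i)} > 0 distinct positive top-i entries. Consider the iteration on ν ∈ ℝ^d given by Δ(ν)^{(p)} = −m·λ̄·ν^{(p)} for p < i and Δ(ν)^{(p)} = (λ^{(p)} − m·λ̄)·ν^{(p)} for p ≥ i, where m = ‖ν‖² and λ̄ = (νᵀΛν)/m. Then ν = ±e_i (the i-th standard basis vector) is a stationary point, and it is the unique stable stationary point: at any stationary point, ν^{(p)} = 0 for p < i, and if ν^{(i)} ≠ 0 then ν = ±e_i. -/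
/-!
Whatever `ν` is, `m · (q / m)` equals the quadratic form `q = ∑ λ_p ν_p²` (both sides vanish at
`ν = 0`), so `Δ ν = 0` says `q ν_p = 0` for `p < i` and `(λ_p - q) ν_p = 0` for `p ≥ i`.
If `q ≠ 0` the first family kills `ν_p` for `p < i`. If `q = 0` the second gives `λ_p ν_p = 0`
for `p ≥ i`, so `q` reduces to `∑_{p<i} λ_p ν_p²` with positive weights, forcing those `ν_p` to
vanish as well. If moreover `ν_i ≠ 0`, then `q = λ_i`; since `λ_p < λ_i` for `p > i`, all other
coordinates vanish, and `q = λ_i ν_i²` gives `ν_i = ±1`.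
-/

open Matrix

section RayleighQuotient

variable {ι : Type*} [Fintype ι]

theorem dotProduct_diagonal_mulVec_self [DecidableEq ι] {R : Type*} [CommSemiring R]
    (lam ν : ι → R) : ν ⬝ᵥ diagonal lam *ᵥ ν = ∑ j, lam j * ν j ^ 2 := by
  simp only [dotProduct, mulVec_diagonal]
  exact Finset.sum_congr rfl fun j _ => by ring

/-- With the junk value `x / 0 = 0`, `m * (q / m) = q` holds also at `ν = 0`, where `q = 0`. -/
theorem dotProduct_self_mul_div (A : Matrix ι ι ℝ) (ν : ι → ℝ) :
    (ν ⬝ᵥ ν) * ((ν ⬝ᵥ A *ᵥ ν) / (ν ⬝ᵥ ν)) = ν ⬝ᵥ A *ᵥ ν := by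
  rcases eq_or_ne ν 0 with rfl | hν
  · simp
  · exact mul_div_cancel₀ _ (dotProduct_self_eq_zero.not.mpr hν)

end RayleighQuotient

section Stationary

variable {ι : Type*} [LinearOrder ι] {lam ν : ι → ℝ} {i : ι} {q : ℝ}

theorem eq_lam_of_stationary_of_ne_zero (hhigh : ∀ p, i ≤ p → (lam p - q) * ν p = 0)
    (hνi : ν i ≠ 0) : q = lam i :=
  (sub_eq_zero.mp ((mul_eq_zero.mp (hhigh i le_rfl)).resolve_right hνi)).symm

theorem eq_zero_of_stationary_of_lt [Fintype ι] (hpos : ∀ p < i, 0 < lam p)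
    (hq : q = ∑ j, lam j * ν j ^ 2) (hlow : ∀ p < i, q * ν p = 0)
    (hhigh : ∀ p, i ≤ p → (lam p - q) * ν p = 0) (p : ι) (hp : p < i) : ν p = 0 := by
  rcases eq_or_ne q 0 with rfl | hq0
  · have hterm_nonneg : ∀ j ∈ Finset.univ, 0 ≤ lam j * ν j ^ 2 := by
      intro j _
      rcases lt_or_ge j i with hj | hj
      · exact mul_nonneg (hpos j hj).le (sq_nonneg _)
      · have h : lam j * ν j = 0 := by simpa using hhigh j hj
        rw [sq, ← mul_assoc, h, zero_mul]
    have hterm := (Finset.sum_eq_zero_iff_of_nonneg hterm_nonneg).mp hq.symm p (Finset.mem_univ p)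
    exact pow_eq_zero_iff two_ne_zero |>.mp
      ((mul_eq_zero.mp hterm).resolve_left (hpos p hp).ne')
  · exact (mul_eq_zero.mp (hlow p hp)).resolve_left hq0

theorem eq_zero_of_stationary_of_ne (htop : ∀ p, i < p → lam p < lam i)
    (hlow : ∀ p < i, ν p = 0) (hhigh : ∀ p, i ≤ p → (lam p - q) * ν p = 0)
    (hνi : ν i ≠ 0) (p : ι) (hp : p ≠ i) : ν p = 0 := by
  have hqi := eq_lam_of_stationary_of_ne_zero hhigh hνi
  rcases hp.lt_or_gt with hp | hp
  · exact hlow p hp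
  · exact (mul_eq_zero.mp (hhigh p hp.le)).resolve_left (by linarith [htop p hp])

theorem eq_single_of_stationary [Fintype ι] [DecidableEq ι] (hpos : 0 < lam i)
    (htop : ∀ p, i < p → lam p < lam i) (hq : q = ∑ j, lam j * ν j ^ 2)
    (hlow : ∀ p < i, ν p = 0) (hhigh : ∀ p, i ≤ p → (lam p - q) * ν p = 0)
    (hνi : ν i ≠ 0) : ν = Pi.single i 1 ∨ ν = -Pi.single i 1 := by
  have hzero := eq_zero_of_stationary_of_ne htop hlow hhigh hνi
  have hν : ν = Pi.single i (ν i) := by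
    funext p
    rcases eq_or_ne p i with rfl | hp
    · simp
    · simp [hzero p hp, hp]
  have hqi := eq_lam_of_stationary_of_ne_zero hhigh hνi
  have hsq : ν i ^ 2 = 1 := by
    rw [hν, Finset.sum_eq_single i (fun j _ hj => by simp [hj]) (by simp)] at hq
    rw [Pi.single_eq_same, hqi] at hq
    exact (mul_eq_left₀ hpos.ne').mp hq.symm
  rcases sq_eq_one_iff.mp hsq with h | h
  · left
    rw [hν, h]
  · right
    rw [hν, h, Pi.single_neg]

end Stationary

/-- Coordinate form of the GHA-GEP update with exact parents: ±e_i is the unique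
stable stationary point. -/
theorem stmt15 (d : ℕ) (i : Fin d) (lam : Fin d → ℝ)
    (hstrict : ∀ j l : Fin d, j < l → l ≤ i → lam l < lam j)
    (hpos : 0 < lam i)
    (htop : ∀ p : Fin d, i < p → lam p < lam i) :
    let Δ : (Fin d → ℝ) → (Fin d → ℝ) := fun ν p =>
      if p < i then
        -((ν ⬝ᵥ ν) * ((ν ⬝ᵥ (Matrix.diagonal lam).mulVec ν) / (ν ⬝ᵥ ν))) * ν p
      else
        (lam p - (ν ⬝ᵥ ν) * ((ν ⬝ᵥ (Matrix.diagonal lam).mulVec ν) / (ν ⬝ᵥ ν))) * ν p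
    Δ (Pi.single i 1) = 0 ∧ Δ (-(Pi.single i 1)) = 0 ∧
    ∀ ν : Fin d → ℝ, Δ ν = 0 →
      (∀ p : Fin d, p < i → ν p = 0) ∧
      (ν i ≠ 0 → ν = Pi.single i 1 ∨ ν = -(Pi.single i 1)) := by
  intro Δ
  set Q : (Fin d → ℝ) → ℝ := fun ν => ∑ j, lam j * ν j ^ 2
  have hΔ (ν : Fin d → ℝ) (p : Fin d) :
      Δ ν p = if p < i then -Q ν * ν p else (lam p - Q ν) * ν p := by
    simp only [Δ, dotProduct_self_mul_div]
    simp only [dotProduct_diagonal_mulVec_self, Q]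
  have hsingle (c : ℝ) (hc : c ^ 2 = 1) : Δ (Pi.single i c) = 0 := by
    have hQc : Q (Pi.single i c) = lam i := by
      simp [Q, Pi.single_apply, hc]
    funext p
    rcases lt_trichotomy p i with hp | rfl | hp
    · simp [hΔ, hp, hp.ne]
    · simp [hΔ, hQc]
    · simp [hΔ, hp.not_gt, hp.ne']
  refine ⟨hsingle 1 (one_pow 2), ?_, fun ν hν => ?_⟩
  · simpa [Pi.single_neg] using hsingle (-1) (by norm_num)
  have hlow (p : Fin d) (hp : p < i) : Q ν * ν p = 0 := by
    simpa [hΔ, hp] using congrFun hν p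
  have hhigh (p : Fin d) (hp : i ≤ p) : (lam p - Q ν) * ν p = 0 := by
    simpa [hΔ, hp.not_gt] using congrFun hν p
  have hlow0 := eq_zero_of_stationary_of_lt (fun p hp => hpos.trans (hstrict p i hp le_rfl))
    rfl hlow hhigh
  exact ⟨hlow0, eq_single_of_stationary hpos htop rfl hlow0 hhigh⟩
end

section
/- Let A, B be symmetric d×d matrices with B positive definite, let w_1,...,w_d be a B-orthonormal basis of generalized eigenvectors of (A,B) with eigenvalues λ_1 ≥ ... ≥ λ_d, all nonnegative. Fix i, let Δ be a unit vector (‖Δ‖_B-coefficient norm 1) and set ŵ = m(cos(θ)w_i + sin(θ)Δ) with ⟨Δ, Bw_i⟩ = 0. Then the utility U(ŵ) = 2⟨ŵ,Aŵ⟩ − ⟨ŵ,Bŵ⟩⟨ŵ,Aŵ⟩ − 2Σ_{j<i}⟨ŵ,Bw_j⟩⟨w_j,Aŵ⟩ satisfies U(ŵ) = U(mw_i) − sin²(θ)(U(mw_i) − U(mΔ)). -/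
open Matrix

/-- Sinusoidal shape of the δ-EigenGame utility along B-orthogonal perturbations. -/
theorem stmt17 (d : ℕ) (A B : Matrix (Fin d) (Fin d) ℝ)
    (hA : A.IsSymm) (hB : B.PosDef)
    (lam : Fin d → ℝ) (w : Fin d → Fin d → ℝ)
    (horth : ∀ j l : Fin d, w j ⬝ᵥ B.mulVec (w l) = if j = l then 1 else 0)
    (heig : ∀ j : Fin d, A.mulVec (w j) = lam j • B.mulVec (w j))
    (hdec : ∀ j l : Fin d, j ≤ l → lam l ≤ lam j)
    (hnonneg : ∀ j : Fin d, 0 ≤ lam j)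
    (i : Fin d) (Δ : Fin d → ℝ)
    (hΔ : Δ ⬝ᵥ B.mulVec Δ = 1)
    (hΔi : Δ ⬝ᵥ B.mulVec (w i) = 0)
    (m θ : ℝ) (hm : 0 < m) :
    let U : (Fin d → ℝ) → ℝ := fun v =>
      2 * (v ⬝ᵥ A.mulVec v) - (v ⬝ᵥ B.mulVec v) * (v ⬝ᵥ A.mulVec v)
        - 2 * ∑ j ∈ Finset.univ.filter (fun j : Fin d => j < i),
            (v ⬝ᵥ B.mulVec (w j)) * (w j ⬝ᵥ A.mulVec v)
    U (m • (Real.cos θ • w i + Real.sin θ • Δ)) =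
      U (m • w i) - Real.sin θ ^ 2 * (U (m • w i) - U (m • Δ)) := by
  intro U
  have hU : ∀ v, U v = 2 * (v ⬝ᵥ A.mulVec v) - (v ⬝ᵥ B.mulVec v) * (v ⬝ᵥ A.mulVec v)
        - 2 * ∑ j ∈ Finset.univ.filter (fun j : Fin d => j < i),
            (v ⬝ᵥ B.mulVec (w j)) * (w j ⬝ᵥ A.mulVec v) := fun v => rfl
  set c := Real.cos θ with hc
  set s := Real.sin θ with hs
  have hBs : B.IsSymm := by
    have h := hB.isHermitian
    rw [Matrix.IsHermitian, conjTranspose_eq_transpose_of_trivial] at h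
    exact h
  have hsym : ∀ (M : Matrix (Fin d) (Fin d) ℝ), M.IsSymm →
      ∀ x y : Fin d → ℝ, x ⬝ᵥ M.mulVec y = y ⬝ᵥ M.mulVec x := by
    intro M hM x y
    rw [Matrix.dotProduct_mulVec, ← hM, Matrix.vecMul_transpose, dotProduct_comm, hM]
  have asym := hsym A hA
  have bsym := hsym B hBs
  set L := lam i with hL
  set aΔ := Δ ⬝ᵥ A.mulVec Δ with haΔ
  -- basic facts
  have hbiΔ : w i ⬝ᵥ B.mulVec Δ = 0 := by rw [bsym]; exact hΔi
  have haΔi : Δ ⬝ᵥ A.mulVec (w i) = 0 := by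
    rw [heig i, dotProduct_smul, smul_eq_mul, hΔi, mul_zero]
  have haiΔ : w i ⬝ᵥ A.mulVec Δ = 0 := by rw [asym]; exact haΔi
  have hbii : w i ⬝ᵥ B.mulVec (w i) = 1 := by rw [horth i i]; simp
  have haii : w i ⬝ᵥ A.mulVec (w i) = L := by
    rw [heig i, dotProduct_smul, smul_eq_mul, hbii, mul_one]
  -- facts for j < i
  have hbij : ∀ j : Fin d, j < i → w i ⬝ᵥ B.mulVec (w j) = 0 := by
    intro j hj
    rw [horth i j, if_neg (by exact fun h => absurd h.symm (ne_of_lt hj))]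
  have haji : ∀ j : Fin d, j < i → w j ⬝ᵥ A.mulVec (w i) = 0 := by
    intro j hj
    rw [heig i, dotProduct_smul, smul_eq_mul, horth j i,
      if_neg (ne_of_lt hj), mul_zero]
  set S := ∑ j ∈ Finset.univ.filter (fun j : Fin d => j < i),
      (Δ ⬝ᵥ B.mulVec (w j)) * (w j ⬝ᵥ A.mulVec Δ) with hS
  set v := m • (c • w i + s • Δ) with hv
  -- dot products of v
  have hbvv : v ⬝ᵥ B.mulVec v = m ^ 2 * (c ^ 2 + s ^ 2) := by
    rw [hv]
    simp only [Matrix.mulVec_smul, Matrix.mulVec_add, dotProduct_add, add_dotProduct,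
      dotProduct_smul, smul_dotProduct, smul_eq_mul, hbii, hbiΔ, hΔi, hΔ]
    ring
  have havv : v ⬝ᵥ A.mulVec v = m ^ 2 * (c ^ 2 * L + s ^ 2 * aΔ) := by
    rw [hv]
    simp only [Matrix.mulVec_smul, Matrix.mulVec_add, dotProduct_add, add_dotProduct,
      dotProduct_smul, smul_dotProduct, smul_eq_mul, haii, haiΔ, haΔi, ← haΔ]
    ring
  have hsumv : ∑ j ∈ Finset.univ.filter (fun j : Fin d => j < i),
      (v ⬝ᵥ B.mulVec (w j)) * (w j ⬝ᵥ A.mulVec v) = m ^ 2 * s ^ 2 * S := by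
    rw [hS, Finset.mul_sum]
    refine Finset.sum_congr rfl ?_
    intro j hj
    have hj' : j < i := (Finset.mem_filter.mp hj).2
    rw [hv]
    simp only [Matrix.mulVec_smul, Matrix.mulVec_add, dotProduct_add, add_dotProduct,
      dotProduct_smul, smul_dotProduct, smul_eq_mul, hbij j hj', haji j hj']
    ring
  -- dot products of m • w i
  have hb1 : (m • w i) ⬝ᵥ B.mulVec (m • w i) = m ^ 2 := by
    simp only [Matrix.mulVec_smul, dotProduct_smul, smul_dotProduct, smul_eq_mul, hbii]
    ring
  have ha1 : (m • w i) ⬝ᵥ A.mulVec (m • w i) = m ^ 2 * L := by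
    simp only [Matrix.mulVec_smul, dotProduct_smul, smul_dotProduct, smul_eq_mul, haii]
    ring
  have hsum1 : ∑ j ∈ Finset.univ.filter (fun j : Fin d => j < i),
      ((m • w i) ⬝ᵥ B.mulVec (w j)) * (w j ⬝ᵥ A.mulVec (m • w i)) = 0 := by
    refine Finset.sum_eq_zero ?_
    intro j hj
    have hj' : j < i := (Finset.mem_filter.mp hj).2
    simp only [Matrix.mulVec_smul, dotProduct_smul, smul_dotProduct, smul_eq_mul,
      hbij j hj', haji j hj']
    ring
  -- dot products of m • Δ
  have hb2 : (m • Δ) ⬝ᵥ B.mulVec (m • Δ) = m ^ 2 := by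
    simp only [Matrix.mulVec_smul, dotProduct_smul, smul_dotProduct, smul_eq_mul, hΔ]
    ring
  have ha2 : (m • Δ) ⬝ᵥ A.mulVec (m • Δ) = m ^ 2 * aΔ := by
    simp only [Matrix.mulVec_smul, dotProduct_smul, smul_dotProduct, smul_eq_mul, ← haΔ]
    ring
  have hsum2 : ∑ j ∈ Finset.univ.filter (fun j : Fin d => j < i),
      ((m • Δ) ⬝ᵥ B.mulVec (w j)) * (w j ⬝ᵥ A.mulVec (m • Δ)) = m ^ 2 * S := by
    rw [hS, Finset.mul_sum]
    refine Finset.sum_congr rfl ?_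
    intro j hj
    simp only [Matrix.mulVec_smul, dotProduct_smul, smul_dotProduct, smul_eq_mul]
    ring
  have hsc : s ^ 2 + c ^ 2 = 1 := Real.sin_sq_add_cos_sq θ
  rw [hU, hU, hU, hbvv, havv, hsumv, hb1, ha1, hsum1, hb2, ha2, hsum2]
  linear_combination (2 * m ^ 2 * L - m ^ 4 * (L + c ^ 2 * L + s ^ 2 * aΔ)) * hsc
end

section
/- Let A be symmetric positive semidefinite d×d with eigenvalues λ_1 ≥ ... ≥ λ_d ≥ 0. Then for every W ∈ ℝ^{d×k}, trace(WᵀAW(2I_k − WᵀW)) = trace(A·WWᵀ(2I_d − WWᵀ)) ≤ Σ_{i=1}^k λ_i. -/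
/-!
Write `A = Uᵀ diag(λ) U` with the eigenvectors `u j` as the rows of `U`, and `W Wᵀ = V diag(σ) Vᵀ`
by the spectral theorem; at most `k` of the `σ i` are nonzero since `rank (W Wᵀ) = rank W ≤ k`.
With `Q = U V` the trace becomes `λ ⬝ (Q ⊙ Q) m`, where `m i = σ i (2 - σ i) = 1 - (1 - σ i)² ≤ 1`
has at most `k` nonzero entries and `Q ⊙ Q` is doubly stochastic. Replacing `m` by the indicator
of its support only increases the value, and yields weights `t j ∈ [0, 1]` of total mass at most
`k`; for such weights `∑ λ j t j` is largest when mass `1` sits on the `k` largest eigenvalues.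
-/

open Matrix Finset

theorem Antitone.sum_mul_le_sum_filter_lt {d k : ℕ} {lam t : Fin d → ℝ} (hlam : Antitone lam)
    (hlam0 : ∀ j, 0 ≤ lam j) (ht0 : ∀ j, 0 ≤ t j) (ht1 : ∀ j, t j ≤ 1) (hsum : ∑ j, t j ≤ k) :
    ∑ j, lam j * t j ≤ ∑ j ∈ univ.filter (fun j : Fin d => (j : ℕ) < k), lam j := by
  set e : Fin d → ℝ := fun j => if (j : ℕ) < k then 1 else 0
  -- `c` separates the `k` largest values of `lam` from the others
  set c : ℝ := if h : k < d then lam ⟨k, h⟩ else 0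
  have hterm : ∀ j, lam j * (t j - e j) ≤ c * (t j - e j) := by
    intro j
    by_cases hj : (j : ℕ) < k
    · have hcj : c ≤ lam j := by
        unfold c; split_ifs
        · exact hlam (Fin.mk_le_of_le_val hj.le)
        · exact hlam0 j
      simp only [e, if_pos hj]
      exact mul_le_mul_of_nonpos_right hcj (by linarith [ht1 j])
    · have hk : k < d := by omega
      have hjc : lam j ≤ c := by
        simp only [c, dif_pos hk]
        exact hlam (Fin.le_def.mpr (by simp only; omega))
      simp only [e, if_neg hj, sub_zero]
      exact mul_le_mul_of_nonneg_right hjc (ht0 j)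
  have hc : c * (∑ j, t j - ∑ j, e j) ≤ 0 := by
    unfold c; split_ifs with hk
    · refine mul_nonpos_of_nonneg_of_nonpos (hlam0 _) ?_
      simp [e, Fin.card_filter_val_lt, hk.le, hsum]
    · simp
  have hT : ∑ j ∈ univ.filter (fun j : Fin d => (j : ℕ) < k), lam j = ∑ j, lam j * e j := by
    simp [e, Finset.sum_filter]
  rw [hT, ← sub_nonpos, ← Finset.sum_sub_distrib]
  calc ∑ j, (lam j * t j - lam j * e j) = ∑ j, lam j * (t j - e j) := by simp only [mul_sub]
    _ ≤ ∑ j, c * (t j - e j) := Finset.sum_le_sum fun j _ => hterm j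
    _ = c * (∑ j, t j - ∑ j, e j) := by rw [← Finset.mul_sum, Finset.sum_sub_distrib]
    _ ≤ 0 := hc

theorem Antitone.dotProduct_mulVec_le_sum_filter_lt {d k : ℕ} {P : Matrix (Fin d) (Fin d) ℝ}
    (hP : P ∈ doublyStochastic ℝ (Fin d)) {lam m : Fin d → ℝ} (hlam : Antitone lam)
    (hlam0 : ∀ j, 0 ≤ lam j) (hm1 : ∀ i, m i ≤ 1) (hsupp : #{i | m i ≠ 0} ≤ k) :
    lam ⬝ᵥ (P *ᵥ m) ≤ ∑ j ∈ univ.filter (fun j : Fin d => (j : ℕ) < k), lam j := by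
  set e : Fin d → ℝ := fun i => if m i ≠ 0 then 1 else 0
  have hme : m ≤ e := fun i => by
    by_cases hi : m i = 0 <;> simp [e, hi, hm1 i]
  have he0 : 0 ≤ e := fun i => by simp only [e]; split_ifs <;> norm_num
  have he1 : e ≤ 1 := fun i => by simp only [e]; split_ifs <;> norm_num
  have hrow : ∀ j, 0 ≤ fun i => P j i := fun j i => nonneg_of_mem_doublyStochastic hP
  calc lam ⬝ᵥ (P *ᵥ m) ≤ lam ⬝ᵥ (P *ᵥ e) :=
        dotProduct_le_dotProduct_of_nonneg_left
          (fun j => dotProduct_le_dotProduct_of_nonneg_left hme (hrow j)) hlam0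
    _ ≤ _ := by
      refine hlam.sum_mul_le_sum_filter_lt hlam0
        (fun j => dotProduct_nonneg_of_nonneg (hrow j) he0) (fun j => ?_) ?_
      · calc (P *ᵥ e) j ≤ (P *ᵥ 1) j := dotProduct_le_dotProduct_of_nonneg_left he1 (hrow j)
          _ = 1 := by rw [mulVec_one_of_mem_doublyStochastic hP, Pi.one_apply]
      · rw [sum_mulVec_of_mem_doublyStochastic hP]
        simpa [e, Finset.sum_ite] using hsupp

theorem hadamard_self_mem_doublyStochastic {n : Type*} [Fintype n] [DecidableEq n]
    {Q : Matrix n n ℝ} (hQ : Q ∈ unitaryGroup n ℝ) : Q ⊙ Q ∈ doublyStochastic ℝ n := by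
  have hrow := congrFun₂ (mem_unitaryGroup_iff.mp hQ)
  have hcol := congrFun₂ (mem_unitaryGroup_iff'.mp hQ)
  refine mem_doublyStochastic_iff_sum.mpr ⟨fun i j => mul_self_nonneg _, fun i => ?_, fun j => ?_⟩
  · simpa [mul_apply] using hrow i i
  · simpa [mul_apply] using hcol j j

theorem trace_conj_diagonal_mul_conj_diagonal {n R : Type*} [Fintype n] [DecidableEq n]
    [CommRing R] (U V : Matrix n n R) (lam m : n → R) :
    trace (Uᵀ * diagonal lam * U * (V * diagonal m * Vᵀ)) =
      lam ⬝ᵥ (((U * V) ⊙ (U * V)) *ᵥ m) := by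
  have hcycle : trace (Uᵀ * diagonal lam * U * (V * diagonal m * Vᵀ))
      = trace (diagonal lam * ((U * V) * diagonal m * (U * V)ᵀ)) := by
    rw [Matrix.mul_assoc, Matrix.mul_assoc, trace_mul_comm, transpose_mul]
    simp only [Matrix.mul_assoc]
  rw [hcycle]
  generalize U * V = Q
  simp only [trace, Matrix.diag_apply, diagonal_mul, mul_apply (M := Q * diagonal m), mul_diagonal,
    transpose_apply, dotProduct, mulVec, hadamard_apply, Finset.mul_sum]
  exact Finset.sum_congr rfl fun j _ => Finset.sum_congr rfl fun i _ => by ring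

theorem two_sub_mul_mul_eq_mul_two_sub_mul {m n R : Type*} [Fintype m] [Fintype n]
    [DecidableEq m] [DecidableEq n] [CommRing R] (B : Matrix m n R) (C : Matrix n m R) :
    (2 - B * C) * B = B * (2 - C * B) := by
  have h2 : (2 : Matrix m m R) * B = B * (2 : Matrix n n R) := by
    ext i j; simp [← diagonal_ofNat, mul_comm]
  rw [Matrix.mul_sub, Matrix.sub_mul, h2, Matrix.mul_assoc]

theorem trace_transpose_mul_mul_mul_two_sub {m n R : Type*} [Fintype m] [Fintype n]
    [DecidableEq m] [DecidableEq n] [CommRing R] (W : Matrix m n R) (A : Matrix m m R) :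
    (Wᵀ * A * W * (2 - Wᵀ * W)).trace = (A * (W * Wᵀ * (2 - W * Wᵀ))).trace := by
  rw [Matrix.mul_assoc, Matrix.mul_assoc, trace_mul_comm, Matrix.mul_assoc, Matrix.mul_assoc,
    two_sub_mul_mul_eq_mul_two_sub_mul, ← Matrix.mul_assoc W]

theorem eq_transpose_mul_diagonal_mul_of_mulVec_row {n R : Type*} [Fintype n] [DecidableEq n]
    [CommRing R] {A U : Matrix n n R} {lam : n → R} (hU : U * Uᵀ = 1)
    (heig : ∀ j, A *ᵥ U j = lam j • U j) : A = Uᵀ * diagonal lam * U := by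
  have hAU : A * Uᵀ = Uᵀ * diagonal lam := by
    ext i j
    rw [mul_diagonal, transpose_apply, mul_comm]
    simpa [mul_apply, mulVec, dotProduct] using congrFun (heig j) i
  calc A = A * (Uᵀ * U) := by rw [mul_eq_one_comm.mp hU, Matrix.mul_one]
    _ = Uᵀ * diagonal lam * U := by rw [← Matrix.mul_assoc, hAU]

theorem Matrix.IsHermitian.mul_two_sub_self_eq {n : Type*} [Fintype n] [DecidableEq n]
    {C : Matrix n n ℝ} (hC : C.IsHermitian) :
    C * (2 - C) = (hC.eigenvectorUnitary : Matrix n n ℝ) *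
      diagonal (fun i => hC.eigenvalues i * (2 - hC.eigenvalues i)) *
        (hC.eigenvectorUnitary : Matrix n n ℝ)ᵀ := by
  set D := diagonal (RCLike.ofReal ∘ hC.eigenvalues : n → ℝ)
  have hdiag : diagonal (fun i => hC.eigenvalues i * (2 - hC.eigenvalues i)) = D * (2 - D) := by
    rw [← diagonal_ofNat, diagonal_sub, diagonal_mul_diagonal]
    rfl
  calc C * (2 - C) = Unitary.conjStarAlgAut ℝ _ hC.eigenvectorUnitary (D * (2 - D)) := by
        rw [map_mul, map_sub, map_ofNat, ← hC.spectral_theorem]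
    _ = _ := by
        rw [Unitary.conjStarAlgAut_apply, hdiag, star_eq_conjTranspose,
          conjTranspose_eq_transpose_of_trivial]

theorem card_eigenvalues_mul_transpose_self_ne_zero_le {m n : Type*} [Fintype m] [Fintype n]
    [DecidableEq m] (W : Matrix m n ℝ) (hC : (W * Wᵀ).IsHermitian) :
    #{i | hC.eigenvalues i ≠ 0} ≤ Fintype.card n := by
  rw [← Fintype.card_subtype, ← hC.rank_eq_card_non_zero_eigs, rank_self_mul_transpose]
  exact rank_le_card_width W

theorem stmt19_general (d k : ℕ) (A : Matrix (Fin d) (Fin d) ℝ)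
    (lam : Fin d → ℝ) (u : Fin d → Fin d → ℝ)
    (horth : ∀ j l : Fin d, u j ⬝ᵥ u l = if j = l then 1 else 0)
    (heig : ∀ j : Fin d, A.mulVec (u j) = lam j • u j)
    (hdec : ∀ j l : Fin d, j ≤ l → lam l ≤ lam j)
    (hnn : ∀ j : Fin d, 0 ≤ lam j) :
    ∀ W : Matrix (Fin d) (Fin k) ℝ,
      (Wᵀ * A * W * (2 - Wᵀ * W)).trace = (A * (W * Wᵀ * (2 - W * Wᵀ))).trace ∧
      (Wᵀ * A * W * (2 - Wᵀ * W)).trace ≤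
        ∑ j ∈ Finset.univ.filter (fun j : Fin d => (j : ℕ) < k), lam j := by
  intro W
  refine ⟨trace_transpose_mul_mul_mul_two_sub W A, ?_⟩
  have hUU : of u * (of u)ᵀ = 1 := by
    ext j l
    simpa [mul_apply, one_apply, dotProduct] using horth j l
  have hU : of u ∈ unitaryGroup (Fin d) ℝ := by
    rwa [mem_unitaryGroup_iff, star_eq_conjTranspose, conjTranspose_eq_transpose_of_trivial]
  have hC : (W * Wᵀ).IsHermitian := by
    simpa [conjTranspose_eq_transpose_of_trivial] using isHermitian_mul_conjTranspose_self W
  set σ := hC.eigenvalues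
  rw [trace_transpose_mul_mul_mul_two_sub, eq_transpose_mul_diagonal_mul_of_mulVec_row hUU heig,
    hC.mul_two_sub_self_eq, trace_conj_diagonal_mul_conj_diagonal]
  refine Antitone.dotProduct_mulVec_le_sum_filter_lt
    (hadamard_self_mem_doublyStochastic (mul_mem hU hC.eigenvectorUnitary.2))
    (fun j l h => hdec j l h) hnn (fun i => by nlinarith [sq_nonneg (1 - σ i)]) ?_
  calc #{i | σ i * (2 - σ i) ≠ 0} ≤ #{i | σ i ≠ 0} := card_le_card fun i => by
        simp only [mem_filter, mem_univ, true_and]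
        exact left_ne_zero_of_mul
    _ ≤ k := by simpa using card_eigenvalues_mul_transpose_self_ne_zero_le W hC

/-- B = I case of the unconstrained subspace characterisation via von Neumann's
trace inequality. -/
theorem stmt19 (d k : ℕ) (hkd : k ≤ d) (A : Matrix (Fin d) (Fin d) ℝ)
    (hA : A.PosSemidef)
    (lam : Fin d → ℝ) (u : Fin d → Fin d → ℝ)
    (horth : ∀ j l : Fin d, u j ⬝ᵥ u l = if j = l then 1 else 0)
    (heig : ∀ j : Fin d, A.mulVec (u j) = lam j • u j)
    (hdec : ∀ j l : Fin d, j ≤ l → lam l ≤ lam j)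
    (hnn : ∀ j : Fin d, 0 ≤ lam j) :
    ∀ W : Matrix (Fin d) (Fin k) ℝ,
      (Wᵀ * A * W * (2 - Wᵀ * W)).trace = (A * (W * Wᵀ * (2 - W * Wᵀ))).trace ∧
      (Wᵀ * A * W * (2 - Wᵀ * W)).trace ≤
        ∑ j ∈ Finset.univ.filter (fun j : Fin d => (j : ℕ) < k), lam j :=
  stmt19_general d k A lam u horth heig hdec hnn
end
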